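/- arXiv:1903.09337 — 7 statements merged into one kernel-verified Lean document; each statement's English description precedes it below -/
import Mathlib

section
/- Let Ω := [0,1), let T:Ω→Ω be the doubling map T(x) = 2x mod 1, let μ be Lebesgue measure restricted to [0,1), and let χ:[0,1)→(0,∞) be χ(x) = x^{-γ} with γ>1. Then for every n∈ℕ and every b∈ℕ₀ with b ≤ n−1, the trimmed sum has infinite expectation: ∫ S_n^{b}χ dμ = ∞. -/
open MeasureTheory Filter Topology ENNReal

noncomputable section

/-- Birkhoff sum `S_n χ = ∑_{k=1}^n χ ∘ T^{k-1}`. -/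
def birkhoffSumN {Ω : Type*} (T : Ω → Ω) (χ : Ω → ℝ) (n : ℕ) (ω : Ω) : ℝ :=
  ∑ k ∈ Finset.range n, χ (T^[k] ω)

/-- Trimmed sum `S_n^b χ`: the sum of the `n - b` smallest values among
`χ(ω), χ(Tω), …, χ(T^{n-1}ω)`. -/
def trimmedSumN {Ω : Type*} (T : Ω → Ω) (χ : Ω → ℝ) (n b : ℕ) (ω : Ω) : ℝ :=
  (((((List.range n).map fun k => χ (T^[k] ω))).mergeSort (fun a b => a ≤ b)).take (n - b)).sum

/-- Truncated sum `T_n^f χ = ∑_{k=1}^n (χ·1_{χ ≤ f}) ∘ T^{k-1}`. -/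
def truncSumN {Ω : Type*} (T : Ω → Ω) (χ : Ω → ℝ) (n : ℕ) (f : ℝ) (ω : Ω) : ℝ :=
  ∑ k ∈ Finset.range n, if χ (T^[k] ω) ≤ f then χ (T^[k] ω) else 0

/-- A function `L` is slowly varying if `L(cx)/L(x) → 1` as `x → ∞`, for every `c > 0`. -/
def SlowlyVarying (L : ℝ → ℝ) : Prop :=
  ∀ c : ℝ, 0 < c → Tendsto (fun x => L (c * x) / L x) atTop (𝓝 1)

/-- `ls` is a de Bruijn conjugate of the slowly varying function `Lt`. -/
def IsDeBruijnConjugate (Lt ls : ℝ → ℝ) : Prop :=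
  SlowlyVarying ls ∧
  Tendsto (fun x => Lt x * ls (x * Lt x)) atTop (𝓝 1) ∧
  Tendsto (fun x => ls x * Lt (x * ls x)) atTop (𝓝 1)

/-- The measure of dependence `ψ(ℬ,𝒞)` between two sub-σ-fields. -/
def psiDep {Ω : Type*} [MeasurableSpace Ω] (μ : Measure Ω)
    (B C : MeasurableSpace Ω) : ℝ≥0∞ :=
  ⨆ (b : Set Ω) (c : Set Ω) (_ : MeasurableSet[B] b) (_ : MeasurableSet[C] c)
    (_ : 0 < μ b) (_ : 0 < μ c),
    ENNReal.ofReal |(μ (b ∩ c)).toReal / ((μ b).toReal * (μ c).toReal) - 1|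

/-- The σ-field generated by `X_k = χ ∘ T^{k-1}` for `J ≤ k ≤ L`. -/
def sigmaIcc {Ω : Type*} [MeasurableSpace Ω] (T : Ω → Ω) (χ : Ω → ℝ) (J L : ℕ) :
    MeasurableSpace Ω :=
  ⨆ k ∈ Set.Icc J L, MeasurableSpace.comap (fun ω => χ (T^[k - 1] ω)) inferInstance

/-- The σ-field generated by `X_k = χ ∘ T^{k-1}` for `k ≥ J`. -/
def sigmaIci {Ω : Type*} [MeasurableSpace Ω] (T : Ω → Ω) (χ : Ω → ℝ) (J : ℕ) :
    MeasurableSpace Ω :=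
  ⨆ k ∈ Set.Ici J, MeasurableSpace.comap (fun ω => χ (T^[k - 1] ω)) inferInstance

/-- The `n`-th ψ-mixing coefficient of the sequence `(χ ∘ T^{k-1})_{k ≥ 1}`. -/
def psiCoeff {Ω : Type*} [MeasurableSpace Ω] (μ : Measure Ω) (T : Ω → Ω) (χ : Ω → ℝ)
    (n : ℕ) : ℝ≥0∞ :=
  ⨆ (k : ℕ) (_ : 1 ≤ k), psiDep μ (sigmaIcc T χ 1 k) (sigmaIci T χ (k + n))

/-- A bounded operator `U` has a spectral gap: `U = λ·P + N` with `P` a one-dimensional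
projection, `ρ(N) < |λ|`, and `PN = NP = 0`. -/
def HasSpectralGap {F : Type*} [NormedAddCommGroup F] [NormedSpace ℝ F] [CompleteSpace F]
    (U : F →L[ℝ] F) : Prop :=
  ∃ (lam : ℝ) (P N : F →L[ℝ] F),
    U = lam • P + N ∧ P.comp P = P ∧
    Module.finrank ℝ (LinearMap.range (P : F →ₗ[ℝ] F)) = 1 ∧
    spectralRadius ℝ N < ENNReal.ofReal |lam| ∧
    P.comp N = 0 ∧ N.comp P = 0

/-- Property ℭ: `μ` is a `T`-invariant mixing probability measure, `ℱ` (realized as a Banach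
algebra `F` of measurable functions via the injective algebra homomorphism `ι`) contains the
constants, dominates the sup norm, and the transfer operator restricts to a bounded operator
on `F` with a spectral gap. -/
structure PropertyC {Ω : Type*} [MeasurableSpace Ω] (T : Ω → Ω) (μ : Measure Ω)
    {F : Type*} [NormedRing F] [NormedAlgebra ℝ F] [CompleteSpace F]
    (ι : F →ₐ[ℝ] Ω → ℝ) : Prop where
  prob : IsProbabilityMeasure μ
  invariant : MeasurePreserving T μ μ
  mixing : ∀ A B : Set Ω, MeasurableSet A → MeasurableSet B →
    Tendsto (fun n => μ (A ∩ T^[n] ⁻¹' B)) atTop (𝓝 (μ A * μ B))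
  inj : Function.Injective ι
  measurable_mem : ∀ f : F, Measurable (ι f)
  norm_ge_sup : ∀ (f : F) (ω : Ω), |ι f ω| ≤ ‖f‖
  transfer : ∃ That : F →L[ℝ] F,
    (∀ (f : F) (g : Ω → ℝ), Measurable g → (∃ C, ∀ ω, |g ω| ≤ C) →
      ∫ ω, ι (That f) ω * g ω ∂μ = ∫ ω, ι f ω * g (T ω) ∂μ) ∧
    HasSpectralGap That

/-- Property 𝔇: Property ℭ together with the norm control on truncations of the
nonnegative observable `χ`. -/
structure PropertyD {Ω : Type*} [MeasurableSpace Ω] (T : Ω → Ω) (μ : Measure Ω)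
    {F : Type*} [NormedRing F] [NormedAlgebra ℝ F] [CompleteSpace F]
    (ι : F →ₐ[ℝ] Ω → ℝ) (χ : Ω → ℝ) extends PropertyC T μ ι : Prop where
  chi_nonneg : ∀ ω, 0 ≤ χ ω
  chi_meas : Measurable χ
  norm_bound : ∃ K₁ > (0 : ℝ), ∀ ℓ : ℝ, 0 ≤ ℓ →
    (∃ f : F, ι f = (fun ω => if χ ω ≤ ℓ then χ ω else 0) ∧ ‖f‖ ≤ K₁ * ℓ) ∧
    (∃ g : F, ι g = (fun ω => if ℓ < χ ω then (1 : ℝ) else 0) ∧ ‖g‖ ≤ K₁)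

/-- The distribution function `F(x) = μ(χ ≤ x)`. -/
def distF {Ω : Type*} [MeasurableSpace Ω] (μ : Measure Ω) (χ : Ω → ℝ) (x : ℝ) : ℝ :=
  (μ {ω | χ ω ≤ x}).toReal

/-- Generalized inverse `F^←(y) = inf {x | F(x) ≥ y}`. -/
def genInv (F : ℝ → ℝ) (y : ℝ) : ℝ := sInf {x : ℝ | y ≤ F x}

/-- `g_n = F^←(1 - (b_n - ζ_n)/n)` where `ζ_n = b_n^{2/3}`. -/
def gSeq {Ω : Type*} [MeasurableSpace Ω] (μ : Measure Ω) (χ : Ω → ℝ) (b : ℕ → ℕ)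
    (n : ℕ) : ℝ :=
  genInv (distF μ χ) (1 - ((b n : ℝ) - (b n : ℝ) ^ ((2 : ℝ) / 3)) / n)

/-- The norming sequence `d_n = (α/(1-α))·n^{1/α}·b_n^{1-1/α}·ℓ^#((n/b_n)^{1/α})`. -/
def dSeq (α : ℝ) (ls : ℝ → ℝ) (b : ℕ → ℕ) (n : ℕ) : ℝ :=
  α / (1 - α) * (n : ℝ) ^ (1 / α) * (b n : ℝ) ^ (1 - 1 / α) *
    ls (((n : ℝ) / (b n : ℝ)) ^ (1 / α))

end

theorem trimmed_sum_infinite_expectation_doubling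
    (γ : ℝ) (hγ : 1 < γ) (n : ℕ) (hn : 1 ≤ n) (b : ℕ) (hb : b ≤ n - 1) :
    ∫⁻ x, ENNReal.ofReal
        (trimmedSumN (fun x : ℝ => Int.fract (2 * x)) (fun x : ℝ => x ^ (-γ)) n b x)
      ∂(volume.restrict (Set.Ico (0 : ℝ) 1)) = ∞ := by
  set T : ℝ → ℝ := fun x => Int.fract (2 * x) with hT
  set χ : ℝ → ℝ := fun x => x ^ (-γ) with hχ
  set M : ℝ := 2 ^ (n - 1) with hM
  have hMpos : (0:ℝ) < M := by positivity
  have hM1 : (1:ℝ) ≤ M := one_le_pow₀ (by norm_num)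
  -- iterate formula
  have hiter : ∀ x : ℝ, 0 < x → ∀ k, (2:ℝ) ^ k * x < 1 → T^[k] x = 2 ^ k * x := by
    intro x hx k
    induction k with
    | zero => simp
    | succ k ih =>
      intro h
      have h2k : (0:ℝ) < 2 ^ k := by positivity
      have h2 : (2:ℝ) ^ k * x < 1 := by nlinarith [pow_succ (2:ℝ) k, mul_pos h2k hx]
      rw [Function.iterate_succ_apply', ih h2]
      show Int.fract (2 * (2 ^ k * x)) = 2 ^ (k + 1) * x
      have : 2 * ((2:ℝ) ^ k * x) = 2 ^ (k + 1) * x := by ring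
      rw [this, Int.fract_eq_self.2 ⟨by positivity, h⟩]
  -- pointwise lower bound on Ioo 0 (1/M)
  have key : ∀ x ∈ Set.Ioo (0:ℝ) (1 / M),
      M ^ (-γ) * x ^ (-γ) ≤ trimmedSumN T χ n b x := by
    intro x hx
    obtain ⟨hx0, hx1⟩ := hx
    have hMx : M * x < 1 := by
      rw [lt_div_iff₀ hMpos] at hx1; linarith [hx1]
    set m := M ^ (-γ) * x ^ (-γ) with hm
    have hm0 : 0 ≤ m := by positivity
    have hval : ∀ k < n, m ≤ χ (T^[k] x) := by
      intro k hk
      have hkM : (2:ℝ) ^ k ≤ M := by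
        rw [hM]
        exact pow_le_pow_right₀ one_le_two (by omega)
      have hlt : (2:ℝ) ^ k * x < 1 :=
        lt_of_le_of_lt (mul_le_mul_of_nonneg_right hkM hx0.le) hMx
      rw [hiter x hx0 k hlt]
      show m ≤ (2 ^ k * x) ^ (-γ)
      have h1 : (M * x) ^ (-γ) ≤ ((2:ℝ) ^ k * x) ^ (-γ) :=
        Real.rpow_le_rpow_of_nonpos (by positivity)
          (mul_le_mul_of_nonneg_right hkM hx0.le) (by linarith)
      calc m = (M * x) ^ (-γ) := by
              rw [hm, Real.mul_rpow hMpos.le hx0.le]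
        _ ≤ _ := h1
    unfold trimmedSumN
    set l := (List.range n).map (fun k => χ (T^[k] x)) with hl
    set ls := (l.mergeSort (fun a b => a ≤ b)).take (n - b) with hls
    have hmem : ∀ a ∈ ls, m ≤ a := by
      intro a ha
      have h1 : a ∈ l.mergeSort (fun a b => a ≤ b) := List.mem_of_mem_take ha
      have h2 : a ∈ l := (List.mergeSort_perm l _).mem_iff.mp h1
      rw [hl, List.mem_map] at h2
      obtain ⟨k, hk, rfl⟩ := h2
      exact hval k (List.mem_range.mp hk)
    have hne : ls ≠ [] := by
      apply List.ne_nil_of_length_pos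
      rw [hls, List.length_take, List.length_mergeSort, hl, List.length_map,
        List.length_range]
      omega
    obtain ⟨a, ha⟩ := List.exists_mem_of_ne_nil ls hne
    calc m ≤ a := hmem a ha
      _ ≤ ls.sum := List.single_le_sum (fun y hy => le_trans hm0 (hmem y hy)) a ha
  -- divergence of the lower bound integral
  have hnotint : ¬ MeasureTheory.IntegrableOn (fun x : ℝ => x ^ (-γ))
      (Set.Ioo 0 (1 / M)) := by
    rw [intervalIntegral.integrableOn_Ioo_rpow_iff (by positivity)]
    intro h; linarith
  have hmeas : Measurable (fun x : ℝ => x ^ (-γ)) := by fun_prop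
  have htop : ∫⁻ x in Set.Ioo (0:ℝ) (1 / M), ENNReal.ofReal (x ^ (-γ)) = ⊤ := by
    by_contra h
    apply hnotint
    refine ⟨hmeas.aestronglyMeasurable, ?_⟩
    rw [hasFiniteIntegral_iff_ofReal ?_]
    · exact lt_top_iff_ne_top.mpr h
    · refine (ae_restrict_iff' measurableSet_Ioo).2 (ae_of_all _ fun x hx => ?_)
      exact Real.rpow_nonneg hx.1.le _
  have htop2 : ∫⁻ x in Set.Ioo (0:ℝ) (1 / M),
      ENNReal.ofReal (M ^ (-γ) * x ^ (-γ)) = ⊤ := by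
    have hc : ENNReal.ofReal (M ^ (-γ)) ≠ ⊤ := ENNReal.ofReal_ne_top
    calc ∫⁻ x in Set.Ioo (0:ℝ) (1 / M), ENNReal.ofReal (M ^ (-γ) * x ^ (-γ))
        = ∫⁻ x in Set.Ioo (0:ℝ) (1 / M),
            ENNReal.ofReal (M ^ (-γ)) * ENNReal.ofReal (x ^ (-γ)) := by
          refine lintegral_congr fun x => ?_
          rw [ENNReal.ofReal_mul (by positivity)]
      _ = ENNReal.ofReal (M ^ (-γ)) *
            ∫⁻ x in Set.Ioo (0:ℝ) (1 / M), ENNReal.ofReal (x ^ (-γ)) :=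
          lintegral_const_mul' _ _ hc
      _ = ⊤ := by
          rw [htop, ENNReal.mul_top]
          exact (ENNReal.ofReal_pos.2 (by positivity)).ne'
  -- combine
  rw [eq_top_iff, ← htop2]
  calc ∫⁻ x in Set.Ioo (0:ℝ) (1 / M), ENNReal.ofReal (M ^ (-γ) * x ^ (-γ))
      ≤ ∫⁻ x in Set.Ioo (0:ℝ) (1 / M),
          ENNReal.ofReal (trimmedSumN T χ n b x) := by
        refine lintegral_mono_ae ?_
        refine (ae_restrict_iff' measurableSet_Ioo).2 (ae_of_all _ fun x hx => ?_)
        exact ENNReal.ofReal_le_ofReal (key x hx)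
    _ ≤ ∫⁻ x in Set.Ico (0:ℝ) 1, ENNReal.ofReal (trimmedSumN T χ n b x) := by
        refine lintegral_mono' (Measure.restrict_mono ?_ le_rfl) le_rfl
        intro x hx
        exact ⟨hx.1.le, lt_of_lt_of_le hx.2 (by rw [div_le_one hMpos]; exact hM1)⟩
end

section
/- Let (Ω,𝒜,ℙ) be a probability space, let ℬ and 𝒞 be sub-σ-fields of 𝒜, and set ψ(ℬ,𝒞) := sup{|ℙ(B∩C)/(ℙ(B)ℙ(C)) − 1| : B∈ℬ, C∈𝒞, ℙ(B)>0, ℙ(C)>0}. Let X be a nonnegative ℬ-measurable random variable and Y a nonnegative 𝒞-measurable random variable. Then (i) ∫ X·Y dℙ ≤ (1+ψ(ℬ,𝒞))·(∫ X dℙ)·(∫ Y dℙ), and (ii) if ψ(ℬ,𝒞) < 1, then (∫ X dℙ)·(∫ Y dℙ) ≤ (∫ X·Y dℙ)/(1−ψ(ℬ,𝒞)). -/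
open MeasureTheory Filter Topology ENNReal

/-! On sets, the definition of `ψ` gives `(1 - ψ) P b P c ≤ P (b ∩ c) ≤ (1 + ψ) P b P c` for
`b ∈ ℬ`, `c ∈ 𝒞`. For fixed `c` both sides are measures in `b`, so integrating the
`ℬ`-measurable `X` compares `∫_c X dP` with `P c ∫ X dP`; both of these are measures in `c`
(the first is `P.withDensity X`), so integrating the `𝒞`-measurable `Y` gives the theorem.
Each integration only needs the two measures compared on the sub-σ-field, by passing to trims. -/

namespace ENNReal

variable {x y : ℝ≥0∞}

theorem le_one_add_ofReal_abs_div_sub_one_mul (hx : x ≠ ∞) (hy₀ : y ≠ 0) (hy : y ≠ ∞) :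
    x ≤ (1 + ENNReal.ofReal |x.toReal / y.toReal - 1|) * y := by
  have hy_pos : 0 < y.toReal := toReal_pos hy₀ hy
  have hratio : x.toReal / y.toReal ≤ 1 + |x.toReal / y.toReal - 1| := by
    linarith [le_abs_self (x.toReal / y.toReal - 1)]
  calc x = ENNReal.ofReal x.toReal := (ofReal_toReal hx).symm
    _ ≤ ENNReal.ofReal ((1 + |x.toReal / y.toReal - 1|) * y.toReal) :=
        ofReal_le_ofReal ((div_le_iff₀ hy_pos).1 hratio)
    _ = (1 + ENNReal.ofReal |x.toReal / y.toReal - 1|) * y := by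
        rw [ofReal_mul (by positivity), ofReal_add zero_le_one (abs_nonneg _), ofReal_one,
          ofReal_toReal hy]

theorem one_sub_ofReal_abs_div_sub_one_mul_le (hx : x ≠ ∞) (hy₀ : y ≠ 0) (hy : y ≠ ∞) :
    (1 - ENNReal.ofReal |x.toReal / y.toReal - 1|) * y ≤ x := by
  have hy_pos : 0 < y.toReal := toReal_pos hy₀ hy
  have hratio : 1 - |x.toReal / y.toReal - 1| ≤ x.toReal / y.toReal := by
    linarith [neg_abs_le (x.toReal / y.toReal - 1)]
  calc (1 - ENNReal.ofReal |x.toReal / y.toReal - 1|) * y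
      = ENNReal.ofReal ((1 - |x.toReal / y.toReal - 1|) * y.toReal) := by
        rw [ofReal_mul' toReal_nonneg, ofReal_sub _ (abs_nonneg _), ofReal_one,
          ofReal_toReal hy]
    _ ≤ ENNReal.ofReal x.toReal := ofReal_le_ofReal ((le_div_iff₀ hy_pos).1 hratio)
    _ = x := ofReal_toReal hx

end ENNReal

section PsiDep

variable {Ω : Type*} {B C : MeasurableSpace Ω} {m₀ : MeasurableSpace Ω} {P : Measure Ω}
  {b c : Set Ω}

theorem ofReal_abs_le_psiDep (hb : MeasurableSet[B] b) (hc : MeasurableSet[C] c)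
    (hb₀ : P b ≠ 0) (hc₀ : P c ≠ 0) :
    ENNReal.ofReal |(P (b ∩ c)).toReal / (P b * P c).toReal - 1| ≤ psiDep P B C := by
  rw [ENNReal.toReal_mul]
  exact le_iSup_of_le b <| le_iSup_of_le c <| le_iSup_of_le hb <| le_iSup_of_le hc <|
    le_iSup_of_le (pos_iff_ne_zero.2 hb₀) <| le_iSup_of_le (pos_iff_ne_zero.2 hc₀) le_rfl

variable [IsFiniteMeasure P]

theorem measure_inter_le_one_add_psiDep_mul (hb : MeasurableSet[B] b) (hc : MeasurableSet[C] c) :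
    P (b ∩ c) ≤ (1 + psiDep P B C) * (P b * P c) := by
  by_cases h₀ : P b = 0 ∨ P c = 0
  · rcases h₀ with h₀ | h₀
    · simp [measure_mono_null Set.inter_subset_left h₀]
    · simp [measure_mono_null Set.inter_subset_right h₀]
  push Not at h₀
  calc P (b ∩ c)
      ≤ (1 + ENNReal.ofReal |(P (b ∩ c)).toReal / (P b * P c).toReal - 1|) * (P b * P c) :=
        ENNReal.le_one_add_ofReal_abs_div_sub_one_mul (measure_ne_top P _)
          (mul_ne_zero h₀.1 h₀.2) (ENNReal.mul_ne_top (measure_ne_top P _) (measure_ne_top P _))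
    _ ≤ (1 + psiDep P B C) * (P b * P c) := by
        gcongr; exact ofReal_abs_le_psiDep hb hc h₀.1 h₀.2

theorem one_sub_psiDep_mul_le_measure_inter (hb : MeasurableSet[B] b) (hc : MeasurableSet[C] c) :
    (1 - psiDep P B C) * (P b * P c) ≤ P (b ∩ c) := by
  by_cases h₀ : P b = 0 ∨ P c = 0
  · rcases h₀ with h₀ | h₀ <;> simp [h₀]
  push Not at h₀
  calc (1 - psiDep P B C) * (P b * P c)
      ≤ (1 - ENNReal.ofReal |(P (b ∩ c)).toReal / (P b * P c).toReal - 1|) * (P b * P c) := by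
        gcongr; exact ofReal_abs_le_psiDep hb hc h₀.1 h₀.2
    _ ≤ P (b ∩ c) :=
        ENNReal.one_sub_ofReal_abs_div_sub_one_mul_le (measure_ne_top P _)
          (mul_ne_zero h₀.1 h₀.2) (ENNReal.mul_ne_top (measure_ne_top P _) (measure_ne_top P _))

end PsiDep

section SetToFunction

variable {Ω : Type*} {m B C : MeasurableSpace Ω} {m₀ : MeasurableSpace Ω}

theorem lintegral_le_lintegral_of_forall_measurableSet_le (hm : m ≤ m₀)
    {μ ν : Measure Ω} (h : ∀ s, MeasurableSet[m] s → μ s ≤ ν s) {f : Ω → ℝ≥0∞}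
    (hf : Measurable[m] f) : ∫⁻ x, f x ∂μ ≤ ∫⁻ x, f x ∂ν := by
  rw [← lintegral_trim hm hf, ← lintegral_trim hm hf]
  refine lintegral_mono' (Measure.le_iff.2 fun s hs => ?_) le_rfl
  rw [trim_measurableSet_eq hm hs, trim_measurableSet_eq hm hs]
  exact h s hs

variable {μ : Measure Ω} {a : ℝ≥0∞} {X Y : Ω → ℝ≥0∞}

theorem lintegral_mul_le_of_measure_inter_le (hB : B ≤ m₀) (hC : C ≤ m₀)
    (h : ∀ b c, MeasurableSet[B] b → MeasurableSet[C] c → μ (b ∩ c) ≤ a * (μ b * μ c))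
    (hX : Measurable[B] X) (hY : Measurable[C] Y) :
    ∫⁻ ω, X ω * Y ω ∂μ ≤ a * ((∫⁻ ω, X ω ∂μ) * ∫⁻ ω, Y ω ∂μ) := by
  have h_setIntegral (c : Set Ω) (hc : MeasurableSet[C] c) :
      ∫⁻ ω in c, X ω ∂μ ≤ ∫⁻ ω, X ω ∂(a * μ c) • μ := by
    refine lintegral_le_lintegral_of_forall_measurableSet_le hB (fun b hb => ?_) hX
    rw [Measure.restrict_apply (hB b hb), Measure.smul_apply, smul_eq_mul]
    calc μ (b ∩ c) ≤ a * (μ b * μ c) := h b c hb hc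
      _ = a * μ c * μ b := by ring
  calc ∫⁻ ω, X ω * Y ω ∂μ = ∫⁻ ω, Y ω ∂μ.withDensity X :=
        (lintegral_withDensity_eq_lintegral_mul _ (hX.mono hB le_rfl) (hY.mono hC le_rfl)).symm
    _ ≤ ∫⁻ ω, Y ω ∂(a * ∫⁻ ω, X ω ∂μ) • μ := by
        refine lintegral_le_lintegral_of_forall_measurableSet_le hC (fun c hc => ?_) hY
        rw [withDensity_apply X (hC c hc), Measure.smul_apply, smul_eq_mul]
        calc ∫⁻ ω in c, X ω ∂μ ≤ ∫⁻ ω, X ω ∂(a * μ c) • μ := h_setIntegral c hc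
          _ = a * (∫⁻ ω, X ω ∂μ) * μ c := by rw [lintegral_smul_measure, smul_eq_mul]; ring
    _ = a * ((∫⁻ ω, X ω ∂μ) * ∫⁻ ω, Y ω ∂μ) := by rw [lintegral_smul_measure]; ring

theorem le_lintegral_mul_of_le_measure_inter (hB : B ≤ m₀) (hC : C ≤ m₀)
    (h : ∀ b c, MeasurableSet[B] b → MeasurableSet[C] c → a * (μ b * μ c) ≤ μ (b ∩ c))
    (hX : Measurable[B] X) (hY : Measurable[C] Y) :
    a * ((∫⁻ ω, X ω ∂μ) * ∫⁻ ω, Y ω ∂μ) ≤ ∫⁻ ω, X ω * Y ω ∂μ := by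
  have h_setIntegral (c : Set Ω) (hc : MeasurableSet[C] c) :
      ∫⁻ ω, X ω ∂(a * μ c) • μ ≤ ∫⁻ ω in c, X ω ∂μ := by
    refine lintegral_le_lintegral_of_forall_measurableSet_le hB (fun b hb => ?_) hX
    rw [Measure.restrict_apply (hB b hb), Measure.smul_apply, smul_eq_mul]
    calc a * μ c * μ b = a * (μ b * μ c) := by ring
      _ ≤ μ (b ∩ c) := h b c hb hc
  calc a * ((∫⁻ ω, X ω ∂μ) * ∫⁻ ω, Y ω ∂μ) = ∫⁻ ω, Y ω ∂(a * ∫⁻ ω, X ω ∂μ) • μ := by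
        rw [lintegral_smul_measure]; ring
    _ ≤ ∫⁻ ω, Y ω ∂μ.withDensity X := by
        refine lintegral_le_lintegral_of_forall_measurableSet_le hC (fun c hc => ?_) hY
        rw [withDensity_apply X (hC c hc), Measure.smul_apply, smul_eq_mul]
        calc a * (∫⁻ ω, X ω ∂μ) * μ c = ∫⁻ ω, X ω ∂(a * μ c) • μ := by
              rw [lintegral_smul_measure, smul_eq_mul]; ring
          _ ≤ ∫⁻ ω in c, X ω ∂μ := h_setIntegral c hc
    _ = ∫⁻ ω, X ω * Y ω ∂μ :=
        lintegral_withDensity_eq_lintegral_mul _ (hX.mono hB le_rfl) (hY.mono hC le_rfl)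

end SetToFunction

theorem psi_dependence_integral_bounds
    {Ω : Type*} [m : MeasurableSpace Ω] (P : Measure Ω) [IsProbabilityMeasure P]
    (B C : MeasurableSpace Ω) (hB : B ≤ m) (hC : C ≤ m)
    (X Y : Ω → ℝ≥0∞) (hX : Measurable[B] X) (hY : Measurable[C] Y) :
    (∫⁻ ω, X ω * Y ω ∂P ≤ (1 + (@psiDep Ω m P B C)) * ((∫⁻ ω, X ω ∂P) * ∫⁻ ω, Y ω ∂P)) ∧
    ((@psiDep Ω m P B C) < 1 →
      (∫⁻ ω, X ω ∂P) * (∫⁻ ω, Y ω ∂P) ≤ (∫⁻ ω, X ω * Y ω ∂P) / (1 - (@psiDep Ω m P B C))) := by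
  refine ⟨lintegral_mul_le_of_measure_inter_le hB hC
    (fun b c hb hc => measure_inter_le_one_add_psiDep_mul hb hc) hX hY, fun hψ => ?_⟩
  have h_lower := le_lintegral_mul_of_le_measure_inter hB hC
    (fun b c hb hc => one_sub_psiDep_mul_le_measure_inter (P := P) hb hc) hX hY
  rw [ENNReal.le_div_iff_mul_le (Or.inl (tsub_pos_of_lt hψ).ne')
    (Or.inl (ENNReal.sub_ne_top ENNReal.one_ne_top)), mul_comm]
  exact h_lower
end

section
/- Let (Ω,𝒜,μ) be a probability space, T:Ω→Ω measure preserving, χ:Ω→[0,∞) measurable with μ(χ>x)=L(x)/x^α for all x>0, L slowly varying, 0<α<1; let (b_n) be natural numbers tending to infinity with b_n=o(n); put ζ_n := b_n^{2/3}, g_n := F^←(1−(b_n−ζ_n)/n). Assume the ψ-mixing coefficients of (χ∘T^{n-1}) satisfy ψ(r)<1 for some r∈ℕ, and let r := min{n∈ℕ : ψ(n)<1}. Then there exists N∈ℕ such that for all n≥N and all k≥1: ∫ T_n^{2^k·g_n}χ · 1_{Φ_{k,n}} dμ ≤ ((1+ψ(r))²/(1−ψ(r))) · (∫ T_n^{2^k·g_n}χ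 dμ) · μ(Φ'_{k,n}), where Φ_{k,n} := { T_n^{2^{k-1}·g_n}χ < S_n^{b_n}χ } and Φ'_{k,n} := { #{ j≤n : χ∘T^{j-1} > 2^{k-1}·g_n } > b_n − 2r + 1 }. -/
open MeasureTheory Filter Topology ENNReal

/-!
If at most `b` of the values `X_j = χ ∘ T^{j-1}`, `j ≤ n`, exceed `ℓ`, then the `n - b` smallest
values are all `≤ ℓ`, so `S_n^b χ ≤ T_n^ℓ χ`; hence `Φ_{k,n}` lies in the event that more than
`b_n` values exceed `ℓ = 2^{k-1} g_n`. Writing `T_n^{2^k g_n} χ` as a sum of truncations of the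
`X_p` and using the layer-cake formula, it suffices to bound `μ(X_p ∈ S, more than b_n
exceedances)` for each `p`. Counting exceedances only in the blocks `[1, p - r]` and `[p + r, n]`
loses at most `2r - 1` indices, and conditioning on the count in the left block, three
applications of the ψ-mixing inequality with gap `r` give the factor `(1 + ψ(r))² / (1 - ψ(r))`.
The estimate holds for every `n`, so `N = 0` works.
-/

open Finset

namespace List

theorem Pairwise.le_of_mem_take {l : List ℝ} (hl : l.Pairwise (· ≤ ·)) {ℓ : ℝ} {m : ℕ}
    (hm : m + l.countP (ℓ < ·) ≤ l.length) {x : ℝ} (hx : x ∈ l.take m) : x ≤ ℓ := by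
  induction l generalizing m with
  | nil => simp at hx
  | cons a t ih =>
    rw [pairwise_cons] at hl
    cases m with
    | zero => simp at hx
    | succ m =>
      rw [take_succ_cons, mem_cons] at hx
      rcases hx with rfl | hx
      · by_contra! hℓx
        have hall : (x :: t).countP (ℓ < ·) = (x :: t).length :=
          countP_eq_length.mpr fun y hy => by
            rcases mem_cons.mp hy with rfl | hy
            · simpa using hℓx
            · simpa using hℓx.trans_le (hl.1 y hy)
        simp only [length_cons] at hm hall
        omega
      · refine ih hl.2 ?_ hx
        simp only [countP_cons, length_cons] at hm
        split_ifs at hm <;> omega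

theorem sum_take_mergeSort_le_sum_filter {l : List ℝ} (hl : ∀ x ∈ l, 0 ≤ x) {ℓ : ℝ} {m : ℕ}
    (hm : m + l.countP (ℓ < ·) ≤ l.length) :
    ((l.mergeSort fun a b => a ≤ b).take m).sum ≤ (l.filter (· ≤ ℓ)).sum := by
  set s := l.mergeSort fun a b => a ≤ b
  have hperm : s.Perm l := mergeSort_perm l _
  have hs : s.Pairwise (· ≤ ·) := sortedLE_mergeSort.pairwise
  have htake : ∀ x ∈ s.take m, x ≤ ℓ := fun x hx =>
    hs.le_of_mem_take (by rwa [hperm.countP_eq, hperm.length_eq]) hx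
  calc (s.take m).sum = ((s.take m).filter (· ≤ ℓ)).sum := by
        rw [filter_eq_self.mpr fun x hx => decide_eq_true (htake x hx)]
    _ ≤ (s.filter (· ≤ ℓ)).sum :=
        ((take_sublist m s).filter _).sum_le_sum fun x hx =>
          hl x (hperm.subset (mem_of_mem_filter hx))
    _ = (l.filter (· ≤ ℓ)).sum := (hperm.filter _).sum_eq

end List

section Exceedances

variable {Ω : Type*} (T : Ω → Ω) (χ : Ω → ℝ)

/-- `#{j ∈ s : X_j > ℓ}`, with the paper's indexing `X_j = χ ∘ T^{j-1}`. -/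
noncomputable def exceedCount (ℓ : ℝ) (s : Finset ℕ) (ω : Ω) : ℕ :=
  #{j ∈ s | ℓ < χ (T^[j - 1] ω)}

theorem exceedCount_Icc_one_eq_countP (ℓ : ℝ) (n : ℕ) (ω : Ω) :
    exceedCount T χ ℓ (Icc 1 n) ω = ((List.range n).map fun k => χ (T^[k] ω)).countP (ℓ < ·) := by
  rw [List.countP_map, exceedCount, ← Ico_add_one_right_eq_Icc, ← zero_add 1,
    ← map_add_right_Ico, ← range_eq_Ico, filter_map, card_map, card_def, filter_val,
    range_val, Multiset.range, Multiset.filter_coe, Multiset.coe_card,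
    List.countP_eq_length_filter]
  rfl

theorem trimmedSumN_le_truncSumN (hχ0 : ∀ ω, 0 ≤ χ ω) {n b : ℕ} {ℓ : ℝ} {ω : Ω}
    (h : exceedCount T χ ℓ (Icc 1 n) ω ≤ b) :
    trimmedSumN T χ n b ω ≤ truncSumN T χ n ℓ ω := by
  have htrunc : truncSumN T χ n ℓ ω =
      (((List.range n).map fun k => χ (T^[k] ω)).filter (· ≤ ℓ)).sum := by
    rw [truncSumN, sum_eq_multiset_sum, range_val, Multiset.range, Multiset.map_coe,
      Multiset.sum_coe, List.sum_map_ite, List.filter_map]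
    simp only [not_le, List.map_const', List.sum_replicate, nsmul_zero, add_zero]
    rfl
  rw [htrunc, exceedCount_Icc_one_eq_countP] at *
  refine List.sum_take_mergeSort_le_sum_filter (by simp [hχ0]) ?_
  have := List.countP_le_length (p := (ℓ < ·)) (l := (List.range n).map fun k => χ (T^[k] ω))
  simp only [List.length_map, List.length_range] at this ⊢
  omega

theorem measurable_exceedCount {m : MeasurableSpace Ω} {ℓ : ℝ} {s : Finset ℕ}
    (h : ∀ j ∈ s, Measurable[m] fun ω => χ (T^[j - 1] ω)) :
    Measurable[m] (exceedCount T χ ℓ s) := by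
  have hsum : exceedCount T χ ℓ s = fun ω => ∑ j ∈ s, if ℓ < χ (T^[j - 1] ω) then 1 else 0 :=
    funext fun ω => card_filter _ _
  rw [hsum]
  exact Finset.measurable_sum s fun j hj =>
    Measurable.ite (measurableSet_lt measurable_const (h j hj)) measurable_const measurable_const

theorem exceedCount_Icc_le_add (ℓ : ℝ) (ω : Ω) (n p r : ℕ) :
    exceedCount T χ ℓ (Icc 1 n) ω ≤ exceedCount T χ ℓ (Icc 1 (p - r)) ω +
      exceedCount T χ ℓ (Icc (p + r) n) ω + (2 * r - 1) := by
  have hcover : Icc 1 n ⊆ Icc 1 (p - r) ∪ Icc (p + r) n ∪ Ioo (p - r) (p + r) := by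
    intro j
    simp only [mem_union, mem_Icc, mem_Ioo]
    omega
  unfold exceedCount
  calc _ ≤ #{j ∈ Icc 1 (p - r) ∪ Icc (p + r) n ∪ Ioo (p - r) (p + r) | ℓ < χ (T^[j - 1] ω)} :=
        card_le_card (filter_subset_filter _ hcover)
    _ ≤ #{j ∈ Icc 1 (p - r) | ℓ < χ (T^[j - 1] ω)} + #{j ∈ Icc (p + r) n | ℓ < χ (T^[j - 1] ω)} +
          #(Ioo (p - r) (p + r)) := by
        rw [filter_union, filter_union]
        exact (card_union_le _ _).trans (add_le_add (card_union_le _ _) (card_filter_le _ _))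
    _ ≤ _ := by
        rw [Nat.card_Ioo]
        omega

theorem exceedCount_Icc_add_le {r n p : ℕ} (hr : 1 ≤ r) (hp : p ≤ n) (ℓ : ℝ) (ω : Ω) :
    exceedCount T χ ℓ (Icc 1 (p - r)) ω + exceedCount T χ ℓ (Icc (p + r) n) ω ≤
      exceedCount T χ ℓ (Icc 1 n) ω := by
  have hdisj : Disjoint (Icc 1 (p - r)) (Icc (p + r) n) := by
    rw [disjoint_left]
    intro j
    simp only [mem_Icc]
    omega
  unfold exceedCount
  rw [← card_union_of_disjoint (disjoint_filter_filter hdisj), ← filter_union]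
  refine card_le_card (filter_subset_filter _ (union_subset ?_ ?_)) <;>
  · intro j
    simp only [mem_Icc]
    omega

theorem setOf_truncSumN_lt_trimmedSumN_subset (hχ0 : ∀ ω, 0 ≤ χ ω) (n b : ℕ) (ℓ : ℝ) :
    {ω | truncSumN T χ n ℓ ω < trimmedSumN T χ n b ω} ⊆ {ω | b < exceedCount T χ ℓ (Icc 1 n) ω} :=
  fun _ hω => lt_of_not_ge fun hcount => (trimmedSumN_le_truncSumN T χ hχ0 hcount).not_gt hω

theorem truncSumN_nonneg (hχ0 : ∀ ω, 0 ≤ χ ω) (n : ℕ) (M : ℝ) : 0 ≤ truncSumN T χ n M :=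
  fun _ => sum_nonneg fun _ _ => by split_ifs <;> simp [hχ0]

end Exceedances

section Mixing

theorem abs_measureReal_inter_sub_le_psiDep {Ω : Type*} {m₁ m₂ : MeasurableSpace Ω}
    [MeasurableSpace Ω] {μ : Measure Ω} [IsFiniteMeasure μ] (hψ : psiDep μ m₁ m₂ ≠ ∞)
    {B C : Set Ω} (hB : MeasurableSet[m₁] B) (hC : MeasurableSet[m₂] C) :
    |μ.real (B ∩ C) - μ.real B * μ.real C| ≤ (psiDep μ m₁ m₂).toReal * (μ.real B * μ.real C) := by
  rcases eq_or_ne (μ B) 0 with hB0 | hB0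
  · simp [measureReal_def, hB0, measure_mono_null Set.inter_subset_left hB0]
  rcases eq_or_ne (μ C) 0 with hC0 | hC0
  · simp [measureReal_def, hC0, measure_mono_null Set.inter_subset_right hC0]
  have hpos : 0 < μ.real B * μ.real C :=
    mul_pos (ENNReal.toReal_pos hB0 (measure_ne_top μ B))
      (ENNReal.toReal_pos hC0 (measure_ne_top μ C))
  have hratio : |μ.real (B ∩ C) / (μ.real B * μ.real C) - 1| ≤ (psiDep μ m₁ m₂).toReal := by
    rw [← ENNReal.ofReal_le_iff_le_toReal hψ]
    exact le_iSup_of_le B <| le_iSup_of_le C <| le_iSup_of_le hB <| le_iSup_of_le hC <|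
      le_iSup_of_le (pos_iff_ne_zero.mpr hB0) <| le_iSup_of_le (pos_iff_ne_zero.mpr hC0) le_rfl
  calc |μ.real (B ∩ C) - μ.real B * μ.real C|
      = |μ.real (B ∩ C) / (μ.real B * μ.real C) - 1| * (μ.real B * μ.real C) := by
        rw [← abs_of_pos hpos, ← abs_mul, abs_of_pos hpos, sub_mul, div_mul_cancel₀ _ hpos.ne',
          one_mul]
    _ ≤ _ := mul_le_mul_of_nonneg_right hratio hpos.le

variable {Ω : Type*} [MeasurableSpace Ω] {μ : Measure Ω} {T : Ω → Ω} {χ : Ω → ℝ}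

theorem measurable_sigmaIcc {J L k : ℕ} (hk : k ∈ Set.Icc J L) :
    Measurable[sigmaIcc T χ J L] fun ω => χ (T^[k - 1] ω) :=
  measurable_iff_comap_le.mpr <| le_iSup₂ (f := fun k (_ : k ∈ Set.Icc J L) =>
    MeasurableSpace.comap (fun ω => χ (T^[k - 1] ω)) inferInstance) k hk

theorem measurable_sigmaIci {J k : ℕ} (hk : k ∈ Set.Ici J) :
    Measurable[sigmaIci T χ J] fun ω => χ (T^[k - 1] ω) :=
  measurable_iff_comap_le.mpr <| le_iSup₂ (f := fun k (_ : k ∈ Set.Ici J) =>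
    MeasurableSpace.comap (fun ω => χ (T^[k - 1] ω)) inferInstance) k hk

theorem sigmaIcc_le (hX : ∀ k, Measurable fun ω => χ (T^[k] ω)) (J L : ℕ) :
    sigmaIcc T χ J L ≤ ‹MeasurableSpace Ω› :=
  iSup₂_le fun k _ => measurable_iff_comap_le.mp (hX (k - 1))

theorem sigmaIci_le (hX : ∀ k, Measurable fun ω => χ (T^[k] ω)) (J : ℕ) :
    sigmaIci T χ J ≤ ‹MeasurableSpace Ω› :=
  iSup₂_le fun k _ => measurable_iff_comap_le.mp (hX (k - 1))

theorem sigmaIci_antitone : Antitone (sigmaIci (Ω := Ω) T χ) :=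
  fun _ _ hij => biSup_mono fun _ hk => hij.trans hk

theorem sigmaIcc_one_zero : sigmaIcc T χ 1 0 = ⊥ := by
  simp [sigmaIcc]

/-- The truncated subtraction in `k ≤ j - r` also admits `k = 0`: the past σ-field is then
trivial and no gap is needed. -/
theorem abs_measureReal_inter_sub_le_psiCoeff [IsProbabilityMeasure μ] {r : ℕ}
    (hψ : psiCoeff μ T χ r ≠ ∞) {k j : ℕ} (hkj : k ≤ j - r) {B C : Set Ω}
    (hB : MeasurableSet[sigmaIcc T χ 1 k] B) (hC : MeasurableSet[sigmaIci T χ j] C) :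
    |μ.real (B ∩ C) - μ.real B * μ.real C| ≤
      (psiCoeff μ T χ r).toReal * (μ.real B * μ.real C) := by
  rcases Nat.eq_zero_or_pos k with rfl | hk
  · rw [sigmaIcc_one_zero, MeasurableSpace.measurableSet_bot_iff] at hB
    rcases hB with rfl | rfl
    · simp
    · simp only [Set.univ_inter, probReal_univ, one_mul, sub_self, abs_zero]
      positivity
  · have hle : psiDep μ (sigmaIcc T χ 1 k) (sigmaIci T χ (k + r)) ≤ psiCoeff μ T χ r :=
      le_iSup₂ (f := fun k (_ : 1 ≤ k) => psiDep μ (sigmaIcc T χ 1 k) (sigmaIci T χ (k + r))) k hk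
    refine (abs_measureReal_inter_sub_le_psiDep (ne_top_of_le_ne_top hψ hle) hB
      (sigmaIci_antitone (by omega : k + r ≤ j) C hC)).trans ?_
    gcongr

end Mixing

section Decoupling

open Function

variable {Ω : Type*} [MeasurableSpace Ω] {μ : Measure Ω}

theorem measure_inter_inter_le_of_abs_sub_le [IsFiniteMeasure μ] {ψ : ℝ} (hψ0 : 0 ≤ ψ)
    (hψ1 : ψ < 1) {A E R : Set Ω}
    (hAER : |μ.real (A ∩ (E ∩ R)) - μ.real A * μ.real (E ∩ R)| ≤
      ψ * (μ.real A * μ.real (E ∩ R)))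
    (hER : |μ.real (E ∩ R) - μ.real E * μ.real R| ≤ ψ * (μ.real E * μ.real R))
    (hAR : |μ.real (A ∩ R) - μ.real A * μ.real R| ≤ ψ * (μ.real A * μ.real R)) :
    μ (A ∩ (E ∩ R)) ≤ ENNReal.ofReal ((1 + ψ) ^ 2 / (1 - ψ)) * μ E * μ (A ∩ R) := by
  have h₁ := (abs_le.mp hAER).2
  have h₂ := (abs_le.mp hER).2
  have h₃ := (abs_le.mp hAR).1
  have hA := measureReal_nonneg (μ := μ) (s := A)
  have hE := measureReal_nonneg (μ := μ) (s := E)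
  have hR := measureReal_nonneg (μ := μ) (s := R)
  have hreal : μ.real (A ∩ (E ∩ R)) ≤ (1 + ψ) ^ 2 / (1 - ψ) * μ.real E * μ.real (A ∩ R) := by
    rw [div_mul_eq_mul_div, div_mul_eq_mul_div, le_div_iff₀ (by linarith)]
    have hAE : 0 ≤ (1 + ψ) * μ.real A := by positivity
    nlinarith [mul_le_mul_of_nonneg_left h₂ hAE, mul_le_mul_of_nonneg_left h₃
      (by positivity : 0 ≤ (1 + ψ) ^ 2 * μ.real E)]
  rw [← ofReal_measureReal, ← ofReal_measureReal, ← ofReal_measureReal,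
    ← ENNReal.ofReal_mul (by positivity), ← ENNReal.ofReal_mul (by positivity)]
  exact ENNReal.ofReal_le_ofReal hreal

theorem measure_inter_iUnion_le {ι : Type*} [Countable ι] {A R : ι → Set Ω} {E : Set Ω}
    {c : ℝ≥0∞} (hA : Pairwise (Disjoint on A)) (hAm : ∀ a, MeasurableSet (A a))
    (hEm : MeasurableSet E) (hRm : ∀ a, MeasurableSet (R a))
    (h : ∀ a, μ (A a ∩ (E ∩ R a)) ≤ c * μ E * μ (A a ∩ R a)) :
    μ (E ∩ ⋃ a, A a ∩ R a) ≤ c * μ E * μ (⋃ a, A a ∩ R a) := by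
  have hdisj (D : Set Ω) : Pairwise (Disjoint on fun a => A a ∩ (D ∩ R a)) :=
    fun a a' haa' => (hA haa').mono Set.inter_subset_left Set.inter_subset_left
  have hAR : (fun a => A a ∩ R a) = fun a => A a ∩ (Set.univ ∩ R a) := by simp
  rw [Set.inter_iUnion]
  simp_rw [Set.inter_left_comm E]
  rw [measure_iUnion (hdisj E) fun a => (hAm a).inter (hEm.inter (hRm a)), hAR,
    measure_iUnion (hdisj Set.univ) fun a => (hAm a).inter (MeasurableSet.univ.inter (hRm a)),
    ← ENNReal.tsum_mul_left]
  simpa using ENNReal.tsum_le_tsum h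

end Decoupling

section KeyEstimate

variable {Ω : Type*} [MeasurableSpace Ω] {μ : Measure Ω} {T : Ω → Ω} {χ : Ω → ℝ}

theorem measure_preimage_inter_exceedCount_gt_le [IsProbabilityMeasure μ]
    (hX : ∀ k, Measurable fun ω => χ (T^[k] ω)) {r : ℕ} (hr : 1 ≤ r)
    (hψ : psiCoeff μ T χ r < 1) {p n : ℕ} (hp : p < n) {S : Set ℝ} (hS : MeasurableSet S)
    (ℓ : ℝ) (b : ℕ) :
    μ ((fun ω => χ (T^[p] ω)) ⁻¹' S ∩ {ω | b < exceedCount T χ ℓ (Icc 1 n) ω}) ≤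
      ENNReal.ofReal ((1 + (psiCoeff μ T χ r).toReal) ^ 2 / (1 - (psiCoeff μ T χ r).toReal)) *
        μ ((fun ω => χ (T^[p] ω)) ⁻¹' S) *
        μ {ω | b + 2 ≤ exceedCount T χ ℓ (Icc 1 n) ω + 2 * r} := by
  have hψ1 : (psiCoeff μ T χ r).toReal < 1 := by
    simpa using ENNReal.toReal_strict_mono ENNReal.one_ne_top hψ
  set E := (fun ω => χ (T^[p] ω)) ⁻¹' S
  set cL := exceedCount T χ ℓ (Icc 1 (p + 1 - r))
  set cR := exceedCount T χ ℓ (Icc (p + 1 + r) n)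
  set A : ℕ → Set Ω := fun a => cL ⁻¹' {a}
  set R : ℕ → Set Ω := fun a => cR ⁻¹' {z | b + 2 ≤ a + z + 2 * r}
  have hA (a : ℕ) : MeasurableSet[sigmaIcc T χ 1 (p + 1 - r)] (A a) :=
    measurable_exceedCount T χ (fun j hj => measurable_sigmaIcc (mem_Icc.mp hj))
      (measurableSet_singleton a)
  have hR (a : ℕ) : MeasurableSet[sigmaIci T χ (p + 1 + r)] (R a) :=
    measurable_exceedCount T χ (fun j hj => measurable_sigmaIci (mem_Icc.mp hj).1)
      (MeasurableSet.of_discrete)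
  have hE₁ : MeasurableSet[sigmaIcc T χ 1 (p + 1)] E := by
    simpa using measurable_sigmaIcc (T := T) (χ := χ) (k := p + 1) ⟨le_add_self, le_rfl⟩ hS
  have hE₂ : MeasurableSet[sigmaIci T χ (p + 1)] E := by
    simpa using measurable_sigmaIci (T := T) (χ := χ) (k := p + 1) (Set.mem_Ici.mpr le_rfl) hS
  have hunion : ⋃ a, A a ∩ R a = {ω | b + 2 ≤ cL ω + cR ω + 2 * r} := by
    ext ω
    simp [A, R]
  have hψtop := hψ.ne_top
  calc μ (E ∩ {ω | b < exceedCount T χ ℓ (Icc 1 n) ω})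
      ≤ μ (E ∩ ⋃ a, A a ∩ R a) := by
        rw [hunion]
        refine measure_mono (Set.inter_subset_inter_right _ fun ω (hω : b < _) => ?_)
        have : exceedCount T χ ℓ (Icc 1 n) ω ≤ cL ω + cR ω + (2 * r - 1) :=
          exceedCount_Icc_le_add T χ ℓ ω n (p + 1) r
        exact (show b + 2 ≤ cL ω + cR ω + 2 * r by omega)
    _ ≤ _ * μ E * μ (⋃ a, A a ∩ R a) :=
        measure_inter_iUnion_le (pairwise_disjoint_fiber cL)
          (fun a => sigmaIcc_le hX _ _ _ (hA a)) (sigmaIcc_le hX _ _ _ hE₁)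
          (fun a => sigmaIci_le hX _ _ (hR a)) fun a =>
          measure_inter_inter_le_of_abs_sub_le ENNReal.toReal_nonneg hψ1
            (abs_measureReal_inter_sub_le_psiCoeff hψtop le_rfl (hA a)
              (hE₂.inter (sigmaIci_antitone (Nat.le_add_right _ _) _ (hR a))))
            (abs_measureReal_inter_sub_le_psiCoeff hψtop (by omega) hE₁ (hR a))
            (abs_measureReal_inter_sub_le_psiCoeff hψtop (by omega) (hA a) (hR a))
    _ ≤ _ := by
        rw [hunion]
        gcongr with ω
        exact exceedCount_Icc_add_le T χ hr hp ℓ ω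

end KeyEstimate

section LayerCake

variable {Ω : Type*} [MeasurableSpace Ω] {μ : Measure Ω}

theorem setIntegral_le_of_measure_inter_le {f : Ω → ℝ} (hf0 : 0 ≤ f) (hfm : Measurable f)
    (hfi : Integrable f μ) {A : Set Ω} {c : ℝ≥0∞} (hc : c ≠ ∞)
    (h : ∀ t, μ ({ω | t < f ω} ∩ A) ≤ c * μ {ω | t < f ω}) :
    ∫ ω in A, f ω ∂μ ≤ c.toReal * ∫ ω, f ω ∂μ := by
  have hlin : ∫⁻ ω in A, ENNReal.ofReal (f ω) ∂μ ≤ c * ∫⁻ ω, ENNReal.ofReal (f ω) ∂μ := by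
    rw [lintegral_eq_lintegral_meas_lt _ (ae_of_all _ hf0) hfm.aemeasurable,
      lintegral_eq_lintegral_meas_lt _ (ae_of_all _ hf0) hfm.aemeasurable,
      ← lintegral_const_mul' _ _ hc]
    refine lintegral_mono fun t => ?_
    rw [Measure.restrict_apply (measurableSet_lt measurable_const hfm)]
    exact h t
  rw [integral_eq_lintegral_of_nonneg_ae (ae_of_all _ hf0) hfm.aestronglyMeasurable,
    integral_eq_lintegral_of_nonneg_ae (ae_of_all _ hf0) hfm.aestronglyMeasurable,
    ← ENNReal.toReal_mul]
  exact ENNReal.toReal_mono (ENNReal.mul_ne_top hc hfi.lintegral_lt_top.ne) hlin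

theorem integrable_ite_le [IsFiniteMeasure μ] {f : Ω → ℝ} (hf : Measurable f) (hf0 : 0 ≤ f)
    (M : ℝ) : Integrable (fun ω => if f ω ≤ M then f ω else 0) μ := by
  refine Integrable.of_bound
    (hf.ite (measurableSet_le hf measurable_const) measurable_const).aestronglyMeasurable |M|
    (ae_of_all _ fun ω => ?_)
  split_ifs with hM
  · rw [Real.norm_of_nonneg (hf0 ω)]
    exact hM.trans (le_abs_self M)
  · simp

variable {T : Ω → Ω} {χ : Ω → ℝ}

theorem integrable_truncSumN [IsFiniteMeasure μ] (hX : ∀ k, Measurable fun ω => χ (T^[k] ω))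
    (hχ0 : ∀ ω, 0 ≤ χ ω) (n : ℕ) (M : ℝ) : Integrable (truncSumN T χ n M) μ := by
  unfold truncSumN
  exact integrable_finsetSum _ fun k _ => integrable_ite_le (hX k) (fun ω => hχ0 _) M

theorem setIntegral_truncSumN_le [IsFiniteMeasure μ] (hX : ∀ k, Measurable fun ω => χ (T^[k] ω))
    (hχ0 : ∀ ω, 0 ≤ χ ω) {n : ℕ} (M : ℝ) {A : Set Ω} {c : ℝ≥0∞} (hc : c ≠ ∞)
    (h : ∀ k < n, ∀ S : Set ℝ, MeasurableSet S →
      μ ((fun ω => χ (T^[k] ω)) ⁻¹' S ∩ A) ≤ c * μ ((fun ω => χ (T^[k] ω)) ⁻¹' S)) :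
    ∫ ω in A, truncSumN T χ n M ω ∂μ ≤ c.toReal * ∫ ω, truncSumN T χ n M ω ∂μ := by
  have hY (k : ℕ) := integrable_ite_le (μ := μ) (hX k) (fun ω => hχ0 _) M
  unfold truncSumN
  rw [integral_finsetSum _ fun k _ => (hY k).integrableOn,
    integral_finsetSum _ fun k _ => hY k, mul_sum]
  gcongr with k hk
  have hmeas : Measurable fun x : ℝ => if x ≤ M then x else 0 :=
    measurable_id.ite measurableSet_Iic measurable_const
  exact setIntegral_le_of_measure_inter_le (fun ω => by dsimp; split_ifs <;> simp [hχ0])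
    (hmeas.comp (hX k)) (hY k) hc fun t =>
    h k (mem_range.mp hk) _ (measurableSet_lt measurable_const hmeas)

end LayerCake

theorem truncated_sum_on_Phi_bound_general
    {Ω : Type*} [MeasurableSpace Ω] (μ : Measure Ω) [IsProbabilityMeasure μ]
    (T : Ω → Ω) (hT : MeasurePreserving T μ μ)
    (χ : Ω → ℝ) (hχm : Measurable χ) (hχ0 : ∀ ω, 0 ≤ χ ω)
    (b : ℕ → ℕ)
    (r : ℕ) (hr1 : 1 ≤ r) (hrψ : psiCoeff μ T χ r < 1)
    :
    ∃ N : ℕ, ∀ n ≥ N, ∀ k : ℕ, 1 ≤ k →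
      (∫ ω in {ω | truncSumN T χ n (2 ^ (k - 1) * gSeq μ χ b n) ω <
          trimmedSumN T χ n (b n) ω},
        truncSumN T χ n (2 ^ k * gSeq μ χ b n) ω ∂μ) ≤
      (1 + (psiCoeff μ T χ r).toReal) ^ 2 / (1 - (psiCoeff μ T χ r).toReal) *
        (∫ ω, truncSumN T χ n (2 ^ k * gSeq μ χ b n) ω ∂μ) *
        (μ {ω | (b n : ℝ) - 2 * r + 1 <
          (((Finset.Icc 1 n).filter fun j =>
            2 ^ (k - 1) * gSeq μ χ b n < χ (T^[j - 1] ω)).card : ℝ)}).toReal := by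
  have hX (k : ℕ) : Measurable fun ω => χ (T^[k] ω) := hχm.comp (hT.measurable.iterate k)
  refine ⟨0, fun n _ k _ => ?_⟩
  set ℓ := 2 ^ (k - 1) * gSeq μ χ b n
  set M := 2 ^ k * gSeq μ χ b n
  set C := (1 + (psiCoeff μ T χ r).toReal) ^ 2 / (1 - (psiCoeff μ T χ r).toReal)
  have hC : 0 ≤ C := div_nonneg (sq_nonneg _)
    (sub_nonneg.mpr (ENNReal.toReal_le_of_le_ofReal zero_le_one (by simpa using hrψ.le)))
  have hΦ' : {ω | (b n : ℝ) - 2 * r + 1 < (exceedCount T χ ℓ (Icc 1 n) ω : ℝ)} =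
      {ω | b n + 2 ≤ exceedCount T χ ℓ (Icc 1 n) ω + 2 * r} := by
    ext ω
    simp only [Set.mem_ofPred_eq, sub_add_eq_add_sub, sub_lt_iff_lt_add]
    norm_cast
  change _ ≤ C * _ * μ.real {ω | (b n : ℝ) - 2 * r + 1 < (exceedCount T χ ℓ (Icc 1 n) ω : ℝ)}
  rw [hΦ']
  calc _ ≤ ∫ ω in {ω | b n < exceedCount T χ ℓ (Icc 1 n) ω}, truncSumN T χ n M ω ∂μ :=
        setIntegral_mono_set (integrable_truncSumN hX hχ0 n M).integrableOn
          (ae_of_all _ (truncSumN_nonneg T χ hχ0 n M))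
          (setOf_truncSumN_lt_trimmedSumN_subset T χ hχ0 n (b n) ℓ).eventuallyLE
    _ ≤ (ENNReal.ofReal C * μ {ω | b n + 2 ≤ exceedCount T χ ℓ (Icc 1 n) ω + 2 * r}).toReal *
          ∫ ω, truncSumN T χ n M ω ∂μ :=
        setIntegral_truncSumN_le hX hχ0 M (by finiteness) fun p hp S hS =>
          (measure_preimage_inter_exceedCount_gt_le hX hr1 hrψ hp hS ℓ (b n)).trans_eq
            (mul_right_comm _ _ _)
    _ = _ := by
        rw [ENNReal.toReal_mul, ENNReal.toReal_ofReal hC, measureReal_def]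
        ring

theorem truncated_sum_on_Phi_bound
    {Ω : Type*} [MeasurableSpace Ω] (μ : Measure Ω) [IsProbabilityMeasure μ]
    (T : Ω → Ω) (hT : MeasurePreserving T μ μ)
    (χ : Ω → ℝ) (hχm : Measurable χ) (hχ0 : ∀ ω, 0 ≤ χ ω)
    (L : ℝ → ℝ) (hL : SlowlyVarying L) (hLpos : ∀ x : ℝ, 0 < x → 0 < L x)
    {α : ℝ} (hα0 : 0 < α) (hα1 : α < 1)
    (htail : ∀ x : ℝ, 0 < x → (μ {ω | x < χ ω}).toReal = L x / x ^ α)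
    (b : ℕ → ℕ) (hb : Tendsto b atTop atTop)
    (hbo : Tendsto (fun n => (b n : ℝ) / (n : ℝ)) atTop (𝓝 0))
    (r : ℕ) (hr1 : 1 ≤ r) (hrψ : psiCoeff μ T χ r < 1)
    (hrmin : ∀ m : ℕ, 1 ≤ m → m < r → 1 ≤ psiCoeff μ T χ m)
    :
    ∃ N : ℕ, ∀ n ≥ N, ∀ k : ℕ, 1 ≤ k →
      (∫ ω in {ω | truncSumN T χ n (2 ^ (k - 1) * gSeq μ χ b n) ω <
          trimmedSumN T χ n (b n) ω},
        truncSumN T χ n (2 ^ k * gSeq μ χ b n) ω ∂μ) ≤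
      (1 + (psiCoeff μ T χ r).toReal) ^ 2 / (1 - (psiCoeff μ T χ r).toReal) *
        (∫ ω, truncSumN T χ n (2 ^ k * gSeq μ χ b n) ω ∂μ) *
        (μ {ω | (b n : ℝ) - 2 * r + 1 <
          (((Finset.Icc 1 n).filter fun j =>
            2 ^ (k - 1) * gSeq μ χ b n < χ (T^[j - 1] ω)).card : ℝ)}).toReal :=
  truncated_sum_on_Phi_bound_general μ T hT χ hχm hχ0 b r hr1 hrψ
end

section
/- Let (Ω,𝒜,μ) be a probability space and χ:Ω→[0,∞) measurable with μ(χ>x)=L(x)/x^α for all x>0, where L is slowly varying and 0<α<1. Let (b_n) be a sequence of natural numbers tending to infinity with b_n=o(n), put ζ_n := b_n^{2/3} and g_n := F^←(1−(b_n−ζ_n)/n). Then 1−F(g_n) ∼ b_n/n as n→∞, i.e. lim_{n→∞} n·(1−F(g_n))/b_n = 1. -/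
open MeasureTheory Filter Topology ENNReal

/-! The tail `1 - F` is regularly varying with index `-α`, so `(1 - F x) / (1 - F (c x)) → c ^ α`.
Since `g_n` is the `(1 - β_n)`-quantile of `F`, with `β_n = (b_n - ζ_n) / n → 0`, the tail at
`(1 + δ) g_n` lies below `β_n` and the tail at `(1 - δ) g_n` above it; letting `δ → 0` gives
`1 - F (g_n) ∼ β_n`, and `n β_n / b_n = 1 - b_n ^ (-1/3) → 1`. -/

open ProbabilityTheory Set

section GenInv

variable {F : ℝ → ℝ} {a x y : ℝ}

lemma mem_lowerBounds_of_apply_lt (hF : Monotone F) (ha : F a < y) :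
    a ∈ lowerBounds {x | y ≤ F x} :=
  fun _ hx => le_of_not_gt fun hxa => (hF hxa.le).not_gt (ha.trans_le hx)

lemma le_genInv (hF : Monotone F) (hy : ∃ x, y ≤ F x) (ha : F a < y) : a ≤ genInv F y :=
  le_csInf hy (mem_lowerBounds_of_apply_lt hF ha)

lemma apply_lt_of_lt_genInv (hF : Monotone F) (ha : F a < y) (hx : x < genInv F y) :
    F x < y :=
  lt_of_not_ge fun hxy => hx.not_ge (csInf_le ⟨a, mem_lowerBounds_of_apply_lt hF ha⟩ hxy)

lemma le_apply_of_genInv_lt (hF : Monotone F) (hy : ∃ x, y ≤ F x) (hx : genInv F y < x) :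
    y ≤ F x := by
  obtain ⟨z, hz, hzx⟩ := exists_lt_of_csInf_lt hy hx
  exact le_trans hz (hF hzx.le)

lemma exists_le_apply_of_lt (hF : Tendsto F atTop (𝓝 1)) (hy : y < 1) : ∃ x, y ≤ F x :=
  (hF.eventually_const_lt hy).exists.imp fun _ => le_of_lt

lemma tendsto_genInv_atTop {ι : Type*} {l : Filter ι} {y : ι → ℝ} (hF : Monotone F)
    (hF1 : ∀ x, F x < 1) (hFtop : Tendsto F atTop (𝓝 1)) (hy : Tendsto y l (𝓝 1))
    (hy1 : ∀ᶠ i in l, y i < 1) : Tendsto (fun i => genInv F (y i)) l atTop :=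
  tendsto_atTop.2 fun M => by
    filter_upwards [hy.eventually_const_lt (hF1 M), hy1] with i hMi hi
    exact le_genInv hF (exists_le_apply_of_lt hFtop hi) hMi

end GenInv

lemma SlowlyVarying.tendsto_div_rpow_div {L : ℝ → ℝ} (hL : SlowlyVarying L) (α : ℝ) {c : ℝ}
    (hc : 0 < c) :
    Tendsto (fun x => (L x / x ^ α) / (L (c * x) / (c * x) ^ α)) atTop (𝓝 (c ^ α)) := by
  have hlim : Tendsto (fun x => c ^ α * (L (c * x) / L x)⁻¹) atTop (𝓝 (c ^ α)) := by
    simpa using ((hL c hc).inv₀ one_ne_zero).const_mul (c ^ α)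
  refine hlim.congr' ?_
  filter_upwards [eventually_gt_atTop 0] with x hx
  have : x ^ α ≠ 0 := (Real.rpow_pos_of_pos hx α).ne'
  rw [Real.mul_rpow hc.le hx.le, inv_div]
  field_simp

lemma tendsto_one_of_rpow_bounds {ι : Type*} {l : Filter ι} {r : ι → ℝ} {ρ : ℝ → ι → ℝ}
    {α : ℝ} (hρ : ∀ c, 0 < c → Tendsto (ρ c) l (𝓝 (c ^ α)))
    (hup : ∀ c, 1 < c → ∀ᶠ i in l, r i ≤ ρ c i)
    (hlo : ∀ c, 0 < c → c < 1 → ∀ᶠ i in l, ρ c i ≤ r i) :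
    Tendsto r l (𝓝 1) := by
  have hcont : Tendsto (fun c : ℝ => c ^ α) (𝓝 1) (𝓝 1) := by
    simpa using (Real.continuousAt_rpow_const 1 α (Or.inl one_ne_zero)).tendsto
  refine tendsto_order.2 ⟨fun a ha => ?_, fun a ha => ?_⟩
  · obtain ⟨c, hac, hc0, hc1⟩ := ((hcont.eventually (lt_mem_nhds ha)).filter_mono
      nhdsWithin_le_nhds |>.and (Ioo_mem_nhdsLT zero_lt_one)).exists
    filter_upwards [(hρ c hc0).eventually (lt_mem_nhds hac), hlo c hc0 hc1] with i h1 h2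
    exact h1.trans_le h2
  · obtain ⟨c, hac, hc1⟩ := ((hcont.eventually (gt_mem_nhds ha)).filter_mono
      nhdsWithin_le_nhds |>.and (self_mem_nhdsWithin (s := Ioi 1))).exists
    filter_upwards [(hρ c (zero_lt_one.trans hc1)).eventually (gt_mem_nhds hac),
      hup c hc1] with i h1 h2
    exact h2.trans_lt h1

theorem tendsto_one_sub_genInv_div {ι : Type*} {l : Filter ι} {F : ℝ → ℝ} {α : ℝ} {β : ι → ℝ}
    (hF : Monotone F) (hF1 : ∀ x, F x < 1) (hFtop : Tendsto F atTop (𝓝 1))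
    (hreg : ∀ c, 0 < c → Tendsto (fun x => (1 - F x) / (1 - F (c * x))) atTop (𝓝 (c ^ α)))
    (hβ : Tendsto β l (𝓝 0)) (hβpos : ∀ᶠ i in l, 0 < β i) :
    Tendsto (fun i => (1 - F (genInv F (1 - β i))) / β i) l (𝓝 1) := by
  set g := fun i => genInv F (1 - β i)
  have hy : Tendsto (fun i => 1 - β i) l (𝓝 1) := by simpa using hβ.const_sub 1
  have hg : Tendsto g l atTop :=
    tendsto_genInv_atTop hF hF1 hFtop hy (hβpos.mono fun _ h => by linarith)
  refine tendsto_one_of_rpow_bounds (ρ := fun c i => (1 - F (g i)) / (1 - F (c * g i)))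
    (fun c hc => (hreg c hc).comp hg) (fun c hc => ?_) (fun c hc0 hc1 => ?_)
  · filter_upwards [hg.eventually_gt_atTop 0, hβpos] with i hgi hβi
    have hcg : 1 - β i ≤ F (c * g i) :=
      le_apply_of_genInv_lt hF (exists_le_apply_of_lt hFtop (by linarith)) (lt_mul_left hgi hc)
    exact div_le_div_of_nonneg_left (by linarith [hF1 (g i)]) (by linarith [hF1 (c * g i)])
      (by linarith)
  · filter_upwards [hg.eventually_gt_atTop 0, hβpos, hy.eventually_const_lt (hF1 0)]
      with i hgi hβi h0
    have hcg : F (c * g i) < 1 - β i :=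
      apply_lt_of_lt_genInv hF h0 (mul_lt_of_lt_one_left hgi hc1)
    exact div_le_div_of_nonneg_left (by linarith [hF1 (g i)]) hβi (by linarith)

section DistF

variable {Ω : Type*} [MeasurableSpace Ω] {μ : Measure Ω} [IsProbabilityMeasure μ] {χ : Ω → ℝ}

lemma distF_eq_cdf_map (hχ : Measurable χ) : distF μ χ = cdf (μ.map χ) := by
  have := Measure.isProbabilityMeasure_map (μ := μ) hχ.aemeasurable
  ext x
  rw [cdf_eq_real, map_measureReal_apply hχ measurableSet_Iic]
  rfl

lemma one_sub_distF (hχ : Measurable χ) (x : ℝ) :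
    1 - distF μ χ x = (μ {ω | x < χ ω}).toReal := by
  have hcompl : {ω | χ ω ≤ x}ᶜ = {ω | x < χ ω} := by ext; simp
  rw [← hcompl, ← measureReal_def,
    probReal_compl_eq_one_sub (s := {ω | χ ω ≤ x}) (hχ measurableSet_Iic)]
  rfl

lemma monotone_distF (hχ : Measurable χ) : Monotone (distF μ χ) :=
  distF_eq_cdf_map (μ := μ) hχ ▸ (cdf (μ.map χ)).mono

lemma tendsto_distF_atTop (hχ : Measurable χ) : Tendsto (distF μ χ) atTop (𝓝 1) :=
  distF_eq_cdf_map (μ := μ) hχ ▸ tendsto_cdf_atTop _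

lemma distF_lt_one (hχ : Measurable χ) (hpos : ∀ x, 0 < x → 0 < (μ {ω | x < χ ω}).toReal)
    (x : ℝ) : distF μ χ x < 1 := by
  have h := hpos (max x 1) (lt_max_of_lt_right one_pos)
  rw [← one_sub_distF (μ := μ) hχ] at h
  linarith [monotone_distF (μ := μ) hχ (le_max_left x 1)]

lemma tendsto_one_sub_distF_div {L : ℝ → ℝ} {α c : ℝ} (hχ : Measurable χ) (hL : SlowlyVarying L)
    (htail : ∀ x : ℝ, 0 < x → (μ {ω | x < χ ω}).toReal = L x / x ^ α) (hc : 0 < c) :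
    Tendsto (fun x => (1 - distF μ χ x) / (1 - distF μ χ (c * x))) atTop (𝓝 (c ^ α)) := by
  refine (hL.tendsto_div_rpow_div α hc).congr' ?_
  filter_upwards [eventually_gt_atTop 0] with x hx
  rw [one_sub_distF hχ, one_sub_distF hχ, htail x hx, htail _ (mul_pos hc hx)]

end DistF

lemma tendsto_sub_rpow_div_self {p : ℝ} (hp : p < 1) :
    Tendsto (fun x : ℝ => (x - x ^ p) / x) atTop (𝓝 1) := by
  have hlim : Tendsto (fun x : ℝ => 1 - x ^ (p - 1)) atTop (𝓝 1) := by
    simpa using (tendsto_rpow_neg_atTop (sub_pos.2 hp)).const_sub 1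
  refine hlim.congr' ?_
  filter_upwards [eventually_gt_atTop 0] with x hx
  rw [sub_div, div_self hx.ne', Real.rpow_sub hx, Real.rpow_one]

theorem tail_at_gn_asymptotic_general
    {Ω : Type*} [MeasurableSpace Ω] (μ : Measure Ω) [IsProbabilityMeasure μ]
    (χ : Ω → ℝ) (hχm : Measurable χ)
    (L : ℝ → ℝ) (hL : SlowlyVarying L) (hLpos : ∀ x : ℝ, 0 < x → 0 < L x)
    {α : ℝ}
    (htail : ∀ x : ℝ, 0 < x → (μ {ω | x < χ ω}).toReal = L x / x ^ α)
    (b : ℕ → ℕ) (hb : Tendsto b atTop atTop)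
    (hbo : Tendsto (fun n => (b n : ℝ) / (n : ℝ)) atTop (𝓝 0))
    :
    Tendsto (fun n : ℕ => (n : ℝ) * (1 - distF μ χ (gSeq μ χ b n)) / (b n : ℝ))
      atTop (𝓝 1) := by
  have hF1 : ∀ x, distF μ χ x < 1 := distF_lt_one hχm fun x hx =>
    htail x hx ▸ div_pos (hLpos x hx) (Real.rpow_pos_of_pos hx α)
  have hbR : Tendsto (fun n => (b n : ℝ)) atTop atTop := tendsto_natCast_atTop_atTop.comp hb
  have hq : Tendsto (fun n => ((b n : ℝ) - (b n : ℝ) ^ ((2 : ℝ) / 3)) / b n) atTop (𝓝 1) :=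
    (tendsto_sub_rpow_div_self (by norm_num)).comp hbR
  set β : ℕ → ℝ := fun n => ((b n : ℝ) - (b n : ℝ) ^ ((2 : ℝ) / 3)) / n
  have hpos : ∀ᶠ n in atTop,
      0 < (b n : ℝ) ∧ 0 < (n : ℝ) ∧ 0 < (b n : ℝ) - (b n : ℝ) ^ ((2 : ℝ) / 3) := by
    filter_upwards [hbR.eventually_gt_atTop 0, eventually_gt_atTop 0,
      hq.eventually_const_lt zero_lt_one] with n hbn hn hqn
    exact ⟨hbn, Nat.cast_pos.2 hn, (div_pos_iff_of_pos_right hbn).1 hqn⟩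
  have hβ : Tendsto β atTop (𝓝 0) := by
    refine (zero_mul (1 : ℝ) ▸ hbo.mul hq).congr' ?_
    filter_upwards [hpos] with n hn
    simp only [β]
    field_simp [hn.1.ne']
  have hβpos : ∀ᶠ n in atTop, 0 < β n := hpos.mono fun _ h => div_pos h.2.2 h.2.1
  have hquantile := tendsto_one_sub_genInv_div (monotone_distF hχm) hF1
    (tendsto_distF_atTop hχm) (fun c hc => tendsto_one_sub_distF_div hχm hL htail hc) hβ hβpos
  refine (one_mul (1 : ℝ) ▸ hquantile.mul hq).congr' ?_
  filter_upwards [hpos] with n hn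
  simp only [β, gSeq]
  field_simp [hn.2.2.ne']

theorem tail_at_gn_asymptotic
    {Ω : Type*} [MeasurableSpace Ω] (μ : Measure Ω) [IsProbabilityMeasure μ]
    (χ : Ω → ℝ) (hχm : Measurable χ) (hχ0 : ∀ ω, 0 ≤ χ ω)
    (L : ℝ → ℝ) (hL : SlowlyVarying L) (hLpos : ∀ x : ℝ, 0 < x → 0 < L x)
    {α : ℝ} (hα0 : 0 < α) (hα1 : α < 1)
    (htail : ∀ x : ℝ, 0 < x → (μ {ω | x < χ ω}).toReal = L x / x ^ α)
    (b : ℕ → ℕ) (hb : Tendsto b atTop atTop)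
    (hbo : Tendsto (fun n => (b n : ℝ) / (n : ℝ)) atTop (𝓝 0))
    :
    Tendsto (fun n : ℕ => (n : ℝ) * (1 - distF μ χ (gSeq μ χ b n)) / (b n : ℝ))
      atTop (𝓝 1) :=
  tail_at_gn_asymptotic_general μ χ hχm L hL hLpos htail b hb hbo
end

section
/- Let (Ω,𝒜,μ) be a probability space and χ:Ω→[0,∞) measurable with μ(χ>x)=L(x)/x^α for all x>0, where L is slowly varying and 0<α<1. Let (b_n) be a sequence of natural numbers tending to infinity with b_n=o(n), put ζ_n := b_n^{2/3} and g_n := F^←(1−(b_n−ζ_n)/n). Then there exists N∈ℕ such that for all n≥N and all integers k≥2: n·μ(χ > 2^{k-1}·g_n) ≤ b_n·2^{3α/4}/2^{kα/2}. -/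
open MeasureTheory Filter Topology ENNReal

private lemma iter_bound' (L : ℝ → ℝ) (X c : ℝ) (hc : 0 < c)
    (hstep : ∀ x, X ≤ x → L (2 * x) ≤ c * L x) :
    ∀ (j : ℕ) (x : ℝ), X ≤ x → 0 ≤ x → L (2 ^ j * x) ≤ c ^ j * L x := by
  intro j
  induction j with
  | zero => intro x _ _; simp
  | succ j ih =>
    intro x hx hx0
    have h2j : (1:ℝ) ≤ 2 ^ j := one_le_pow₀ (by norm_num)
    have h1 : X ≤ 2 ^ j * x := le_trans hx (le_mul_of_one_le_left hx0 h2j)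
    calc L (2 ^ (j+1) * x) = L (2 * (2 ^ j * x)) := by ring_nf
      _ ≤ c * L (2 ^ j * x) := hstep (2 ^ j * x) h1
      _ ≤ c * (c ^ j * L x) := mul_le_mul_of_nonneg_left (ih x hx hx0) hc.le
      _ = c ^ (j+1) * L x := by ring

private lemma two_pow_mul_rpow (m : ℕ) (x α : ℝ) (hx : 0 ≤ x) :
    ((2:ℝ) ^ m * x) ^ α = ((2:ℝ) ^ α) ^ m * x ^ α := by
  rw [Real.mul_rpow (by positivity) hx, ← Real.rpow_natCast (2:ℝ) m,
    ← Real.rpow_natCast ((2:ℝ) ^ α) m, ← Real.rpow_mul (by norm_num),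
    ← Real.rpow_mul (by norm_num), mul_comm α (m:ℝ)]

private lemma small_tail' (L : ℝ → ℝ) (X : ℝ) {α : ℝ} (hα0 : 0 < α)
    (hX1 : 1 ≤ X) (hLX : 0 < L X)
    (hstep : ∀ x, X ≤ x → L (2 * x) ≤ (2:ℝ) ^ (α/2) * L x) :
    ∀ ε : ℝ, 0 < ε → ∃ x, X ≤ x ∧ L x / x ^ α ≤ ε := by
  intro ε hε
  have hX0 : (0:ℝ) < X := lt_of_lt_of_le one_pos hX1
  set c : ℝ := (2:ℝ) ^ (α/2) with hcdef
  have hc0 : 0 < c := Real.rpow_pos_of_pos two_pos _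
  set r : ℝ := c / (2:ℝ) ^ α with hrdef
  have h2a : (0:ℝ) < (2:ℝ) ^ α := Real.rpow_pos_of_pos two_pos _
  have hr0 : 0 ≤ r := by positivity
  have hr1 : r < 1 := by
    rw [hrdef, div_lt_one h2a]
    exact Real.rpow_lt_rpow_of_exponent_lt one_lt_two (by linarith)
  have hCpos : 0 < L X / X ^ α := div_pos hLX (Real.rpow_pos_of_pos hX0 _)
  obtain ⟨m, hm⟩ : ∃ m : ℕ, r ^ m < ε / (L X / X ^ α) := by
    have := tendsto_pow_atTop_nhds_zero_of_lt_one hr0 hr1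
    exact (this.eventually_lt_const (by positivity)).exists
  refine ⟨2 ^ m * X, le_mul_of_one_le_left hX0.le (one_le_pow₀ (by norm_num)), ?_⟩
  have hnum : L (2 ^ m * X) ≤ c ^ m * L X :=
    iter_bound' L X c hc0 hstep m X le_rfl hX0.le
  have hden := two_pow_mul_rpow m X α hX0.le
  have key : L (2 ^ m * X) / ((2:ℝ) ^ m * X) ^ α ≤ r ^ m * (L X / X ^ α) := by
    rw [hden]
    have heq : c ^ m * L X / (((2:ℝ) ^ α) ^ m * X ^ α) = r ^ m * (L X / X ^ α) := by
      rw [hrdef, div_pow]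
      field_simp
    calc L (2 ^ m * X) / (((2:ℝ) ^ α) ^ m * X ^ α)
        ≤ c ^ m * L X / (((2:ℝ) ^ α) ^ m * X ^ α) := by
          have hp : (0:ℝ) < ((2:ℝ) ^ α) ^ m * X ^ α := by positivity
          exact (div_le_div_iff_of_pos_right hp).2 hnum
      _ = r ^ m * (L X / X ^ α) := heq
  refine key.trans ?_
  calc r ^ m * (L X / X ^ α) ≤ (ε / (L X / X ^ α)) * (L X / X ^ α) :=
        mul_le_mul_of_nonneg_right hm.le hCpos.le
    _ = ε := div_mul_cancel₀ _ hCpos.ne'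

set_option maxHeartbeats 1000000 in
theorem tail_at_2k_gn_bound
    {Ω : Type*} [MeasurableSpace Ω] (μ : Measure Ω) [IsProbabilityMeasure μ]
    (χ : Ω → ℝ) (hχm : Measurable χ) (hχ0 : ∀ ω, 0 ≤ χ ω)
    (L : ℝ → ℝ) (hL : SlowlyVarying L) (hLpos : ∀ x : ℝ, 0 < x → 0 < L x)
    {α : ℝ} (hα0 : 0 < α) (hα1 : α < 1)
    (htail : ∀ x : ℝ, 0 < x → (μ {ω | x < χ ω}).toReal = L x / x ^ α)
    (b : ℕ → ℕ) (hb : Tendsto b atTop atTop)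
    (hbo : Tendsto (fun n => (b n : ℝ) / (n : ℝ)) atTop (𝓝 0))
    :
    ∃ N : ℕ, ∀ n ≥ N, ∀ k : ℕ, 2 ≤ k →
      (n : ℝ) * (μ {ω | 2 ^ (k - 1) * gSeq μ χ b n < χ ω}).toReal ≤
        (b n : ℝ) * 2 ^ (3 * α / 4) / 2 ^ ((k : ℝ) * α / 2) := by
  have hc0 : (0:ℝ) < (2:ℝ) ^ (α/2) := Real.rpow_pos_of_pos two_pos _
  have hc1 : (1:ℝ) < (2:ℝ) ^ (α/2) := by
    rw [show (1:ℝ) = (2:ℝ) ^ (0:ℝ) by simp]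
    exact Real.rpow_lt_rpow_of_exponent_lt one_lt_two (by linarith)
  -- choose X from slow variation at c = 2
  obtain ⟨X₀, hX₀⟩ := eventually_atTop.1 ((hL 2 two_pos).eventually_lt_const hc1)
  set X : ℝ := max X₀ 1 with hXdef
  have hX1 : (1:ℝ) ≤ X := le_max_right _ _
  have hX0 : (0:ℝ) < X := lt_of_lt_of_le one_pos hX1
  have hstep : ∀ x, X ≤ x → L (2 * x) ≤ (2:ℝ) ^ (α/2) * L x := by
    intro x hx
    have hx0 : (0:ℝ) < x := lt_of_lt_of_le hX0 hx
    have hLx : 0 < L x := hLpos x hx0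
    have h := hX₀ x (le_trans (le_max_left _ _) hx)
    rw [div_lt_iff₀ hLx] at h
    exact h.le
  have hLX : 0 < L X := hLpos X hX0
  have hsmall := small_tail' L X hα0 hX1 hLX hstep
  -- distribution function facts
  have hFmono : Monotone (distF μ χ) := by
    intro u v huv
    exact ENNReal.toReal_mono (measure_ne_top μ _)
      (measure_mono (fun ω h => le_trans h huv))
  have hsplit : ∀ x : ℝ, distF μ χ x = 1 - (μ {ω | x < χ ω}).toReal := by
    intro x
    have hms : MeasurableSet {ω | χ ω ≤ x} := measurableSet_le hχm measurable_const
    have hcomp : {ω | x < χ ω} = {ω | χ ω ≤ x}ᶜ := by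
      ext ω; simp [not_le]
    have h2 : μ {ω | χ ω ≤ x} + μ {ω | x < χ ω} = 1 := by
      rw [hcomp, measure_add_measure_compl hms, measure_univ]
    have h3 := congrArg ENNReal.toReal h2
    rw [ENNReal.toReal_add (measure_ne_top μ _) (measure_ne_top μ _)] at h3
    simp only [ENNReal.toReal_one] at h3
    simp only [distF]
    linarith
  have hFX : distF μ χ X < 1 := by
    rw [hsplit X, htail X hX0]
    have : 0 < L X / X ^ α := div_pos hLX (Real.rpow_pos_of_pos hX0 _)
    linarith
  -- eventual conditions
  have hev : ∀ᶠ n : ℕ in atTop,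
      2 ≤ b n ∧ (b n : ℝ)/n < 1 - distF μ χ X ∧ 1 ≤ n := by
    filter_upwards [hb.eventually_ge_atTop 2,
      hbo.eventually_lt_const (by linarith : (0:ℝ) < 1 - distF μ χ X),
      eventually_ge_atTop 1] with n h1 h2 h3
    exact ⟨h1, h2, h3⟩
  obtain ⟨N, hN⟩ := eventually_atTop.1 hev
  refine ⟨N, fun n hn k hk => ?_⟩
  obtain ⟨hbn2, hbno, hn1⟩ := hN n hn
  have hnR : (1:ℝ) ≤ (n:ℝ) := by exact_mod_cast hn1
  have hnpos : (0:ℝ) < (n:ℝ) := lt_of_lt_of_le one_pos hnR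
  have hbnR : (2:ℝ) ≤ (b n : ℝ) := by exact_mod_cast hbn2
  set bn : ℝ := (b n : ℝ) with hbndef
  set ζ : ℝ := bn ^ ((2:ℝ)/3) with hζdef
  have hζ0 : 0 ≤ ζ := Real.rpow_nonneg (by linarith) _
  have hζlt : ζ < bn := by
    have h := Real.rpow_lt_rpow_of_exponent_lt (x := bn) (by linarith)
      (by norm_num : (2:ℝ)/3 < 1)
    rwa [Real.rpow_one] at h
  set y : ℝ := 1 - (bn - ζ)/n with hydef
  have hεpos : 0 < (bn - ζ)/n := div_pos (by linarith) hnpos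
  have hybound : distF μ χ X < y := by
    have h1 : (bn - ζ)/n ≤ bn/n := (div_le_div_iff_of_pos_right hnpos).2 (by linarith)
    simp only [hydef]
    linarith
  set S : Set ℝ := {x : ℝ | y ≤ distF μ χ x} with hSdef
  have hgS : gSeq μ χ b n = sInf S := by
    simp only [gSeq, genInv, hSdef, hydef, hζdef, hbndef]
  have hS_lb : ∀ x ∈ S, X ≤ x := by
    intro x hx
    by_contra h
    push_neg at h
    have h1 : distF μ χ x ≤ distF μ χ X := hFmono h.le
    have h2 : y ≤ distF μ χ X := le_trans hx h1
    linarith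
  have hS_ne : S.Nonempty := by
    obtain ⟨x, hXx, hxt⟩ := hsmall ((bn - ζ)/n) hεpos
    refine ⟨x, ?_⟩
    have hx0 : 0 < x := lt_of_lt_of_le hX0 hXx
    show y ≤ distF μ χ x
    rw [hsplit x, htail x hx0]
    simp only [hydef]
    linarith
  set g : ℝ := gSeq μ χ b n with hgdef
  have hgX : X ≤ g := by
    rw [hgS]
    exact le_csInf hS_ne hS_lb
  have hg0 : 0 < g := lt_of_lt_of_le hX0 hgX
  have htail_gt : ∀ x, g < x → (μ {ω | x < χ ω}).toReal ≤ (bn - ζ)/n := by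
    intro x hgx
    rw [hgS] at hgx
    obtain ⟨s, hsS, hsx⟩ := exists_lt_of_csInf_lt hS_ne hgx
    have h1 : y ≤ distF μ χ x := le_trans hsS (hFmono hsx.le)
    rw [hsplit x] at h1
    simp only [hydef] at h1
    linarith
  have hg_tail : (μ {ω | g < χ ω}).toReal ≤ (bn - ζ)/n := by
    have hU : {ω | g < χ ω} = ⋃ m : ℕ, {ω | g + 1/((m:ℝ)+1) < χ ω} := by
      ext ω
      simp only [Set.mem_setOf_eq, Set.mem_iUnion]
      constructor
      · intro h
        obtain ⟨m, hm⟩ := exists_nat_one_div_lt (by linarith : (0:ℝ) < χ ω - g)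
        exact ⟨m, by push_cast at hm ⊢; linarith⟩
      · rintro ⟨m, hm⟩
        have hp : 0 < 1/((m:ℝ)+1) := by positivity
        linarith
    have hmono : Monotone (fun m : ℕ => {ω | g + 1/((m:ℝ)+1) < χ ω}) := by
      intro m m' hmm ω hω
      simp only [Set.mem_setOf_eq] at *
      have hle : 1/((m':ℝ)+1) ≤ 1/((m:ℝ)+1) := by
        apply one_div_le_one_div_of_le (by positivity)
        have : (m:ℝ) ≤ (m':ℝ) := by exact_mod_cast hmm
        linarith
      linarith
    have hbound : ∀ m : ℕ, μ {ω | g + 1/((m:ℝ)+1) < χ ω} ≤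
        ENNReal.ofReal ((bn - ζ)/n) := by
      intro m
      have hlt : g < g + 1/((m:ℝ)+1) := lt_add_of_pos_right g (by positivity)
      exact (ENNReal.le_ofReal_iff_toReal_le (measure_ne_top μ _) hεpos.le).2
        (htail_gt _ hlt)
    have h1 : μ {ω | g < χ ω} ≤ ENNReal.ofReal ((bn - ζ)/n) := by
      rw [hU, hmono.measure_iUnion]
      exact iSup_le hbound
    exact ENNReal.toReal_le_of_le_ofReal hεpos.le h1
  -- key bound at g
  have hkey : (n:ℝ) * (L g / g ^ α) ≤ bn - ζ := by
    rw [← htail g hg0]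
    calc (n:ℝ) * (μ {ω | g < χ ω}).toReal ≤ (n:ℝ) * ((bn - ζ)/n) :=
          mul_le_mul_of_nonneg_left hg_tail (by positivity)
      _ = bn - ζ := by field_simp
  -- now the k part
  set j : ℕ := k - 1 with hjdef
  have hjk : (k:ℝ) = (j:ℝ) + 1 := by
    have : j + 1 = k := Nat.sub_add_cancel (le_trans one_le_two hk)
    exact_mod_cast (congrArg (Nat.cast : ℕ → ℝ) this).symm
  have hx0 : (0:ℝ) < 2 ^ j * g := by positivity
  rw [htail _ hx0]
  have hLgpos : 0 < L g := hLpos g hg0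
  have hLx : L ((2:ℝ) ^ j * g) ≤ ((2:ℝ) ^ (α/2)) ^ j * L g :=
    iter_bound' L X _ hc0 hstep j g hgX hg0.le
  have hden := two_pow_mul_rpow j g α hg0.le
  have hDpos : (0:ℝ) < ((2:ℝ) ^ α) ^ j * g ^ α := by
    have := Real.rpow_pos_of_pos hg0 α
    have := Real.rpow_pos_of_pos (show (0:ℝ) < 2 by norm_num) α
    positivity
  have hgapos : (0:ℝ) < g ^ α := Real.rpow_pos_of_pos hg0 α
  have h2apos : (0:ℝ) < (2:ℝ) ^ α := Real.rpow_pos_of_pos two_pos α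
  have hratio_pos : (0:ℝ) < ((2:ℝ) ^ (α/2)) ^ j / ((2:ℝ) ^ α) ^ j := by positivity
  have step1 : (n:ℝ) * (L ((2:ℝ) ^ j * g) / ((2:ℝ) ^ j * g) ^ α) ≤
      (((2:ℝ) ^ (α/2)) ^ j / ((2:ℝ) ^ α) ^ j) * ((n:ℝ) * (L g / g ^ α)) := by
    rw [hden]
    have h1 : L ((2:ℝ) ^ j * g) / (((2:ℝ) ^ α) ^ j * g ^ α) ≤
        (((2:ℝ) ^ (α/2)) ^ j * L g) / (((2:ℝ) ^ α) ^ j * g ^ α) :=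
      (div_le_div_iff_of_pos_right hDpos).2 hLx
    calc (n:ℝ) * (L ((2:ℝ) ^ j * g) / (((2:ℝ) ^ α) ^ j * g ^ α))
        ≤ (n:ℝ) * ((((2:ℝ) ^ (α/2)) ^ j * L g) / (((2:ℝ) ^ α) ^ j * g ^ α)) :=
          mul_le_mul_of_nonneg_left h1 (by positivity)
      _ = (((2:ℝ) ^ (α/2)) ^ j / ((2:ℝ) ^ α) ^ j) * ((n:ℝ) * (L g / g ^ α)) := by
          field_simp
  have step2 : (((2:ℝ) ^ (α/2)) ^ j / ((2:ℝ) ^ α) ^ j) * ((n:ℝ) * (L g / g ^ α)) ≤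
      (((2:ℝ) ^ (α/2)) ^ j / ((2:ℝ) ^ α) ^ j) * bn :=
    mul_le_mul_of_nonneg_left (hkey.trans (by linarith)) hratio_pos.le
  have e1 : ((2:ℝ) ^ (α/2)) ^ j = (2:ℝ) ^ (α/2 * (j:ℝ)) := by
    rw [Real.rpow_mul (by norm_num : (0:ℝ) ≤ 2), Real.rpow_natCast]
  have e2 : ((2:ℝ) ^ α) ^ j = (2:ℝ) ^ (α * (j:ℝ)) := by
    rw [Real.rpow_mul (by norm_num : (0:ℝ) ≤ 2), Real.rpow_natCast]
  have step3 : (((2:ℝ) ^ (α/2)) ^ j / ((2:ℝ) ^ α) ^ j) * bn ≤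
      bn * 2 ^ (3 * α / 4) / 2 ^ ((k:ℝ) * α / 2) := by
    rw [e1, e2, ← Real.rpow_sub two_pos, mul_div_assoc, ← Real.rpow_sub two_pos]
    have hexp : α/2 * (j:ℝ) - α * (j:ℝ) ≤ 3 * α / 4 - (k:ℝ) * α / 2 := by
      rw [hjk]
      have hja : α/2 * (j:ℝ) - α * (j:ℝ) = -(α * (j:ℝ))/2 := by ring
      have hjb : 3 * α / 4 - ((j:ℝ) + 1) * α / 2 = α/4 - (α * (j:ℝ))/2 := by ring
      rw [hja, hjb]
      linarith
    have hbn0 : (0:ℝ) ≤ bn := by linarith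
    have hrp : (2:ℝ) ^ (α/2 * (j:ℝ) - α * (j:ℝ)) ≤
        (2:ℝ) ^ (3 * α / 4 - (k:ℝ) * α / 2) :=
      Real.rpow_le_rpow_of_exponent_le (by norm_num) hexp
    calc (2:ℝ) ^ (α/2 * (j:ℝ) - α * (j:ℝ)) * bn
        ≤ (2:ℝ) ^ (3 * α / 4 - (k:ℝ) * α / 2) * bn :=
          mul_le_mul_of_nonneg_right hrp hbn0
      _ = bn * (2:ℝ) ^ (3 * α / 4 - (k:ℝ) * α / 2) := mul_comm _ _
  calc (n:ℝ) * (L ((2:ℝ) ^ j * g) / ((2:ℝ) ^ j * g) ^ α)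
      ≤ (((2:ℝ) ^ (α/2)) ^ j / ((2:ℝ) ^ α) ^ j) * ((n:ℝ) * (L g / g ^ α)) := step1
    _ ≤ (((2:ℝ) ^ (α/2)) ^ j / ((2:ℝ) ^ α) ^ j) * bn := step2
    _ ≤ bn * 2 ^ (3 * α / 4) / 2 ^ ((k:ℝ) * α / 2) := step3
end

section
/- Let (Ω,𝒜,μ) be a probability space, T:Ω→Ω measure preserving, χ:Ω→[0,∞) measurable with μ(χ>x)=L(x)/x^α for all x>0, L slowly varying, 0<α<1; let (b_n) be natural numbers tending to infinity with b_n=o(n); put ζ_n := b_n^{2/3}, g_n := F^←(1−(b_n−ζ_n)/n); assume the ψ-mixing coefficients of (χ∘T^{n-1}) satisfy ψ(r)<1 for r := min{n∈ℕ : ψ(n)<1}. Set m := ⌊2/α⌋+1 and Υ_{k,n} := { #{ j≤n : χ∘T^{j-1} > 2^{k-1}·g_n } ≥ m·r }. Then there exists N∈ℕ such that for all n≥N and all integers k≥2: μ(Υ_{k,n}) ≤ 2^{m−1}·(2·b_n/2^{kα/2})^m. -/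
open MeasureTheory Filter Topology ENNReal

section AuxLemmas


lemma strictMono_nat_gap {n : ℕ} {f : Fin n → ℕ} (hf : StrictMono f) :
    ∀ (d : ℕ) (a b : Fin n), (a : ℕ) + d = (b : ℕ) → f a + d ≤ f b := by
  intro d
  induction d with
  | zero =>
    intro a b h
    have : a = b := Fin.ext (by omega)
    subst this; simp
  | succ d ih =>
    intro a b h
    have hb' : (a : ℕ) + d < n := by
      have := b.isLt; omega
    set b' : Fin n := ⟨(a : ℕ) + d, hb'⟩
    have h1 : f a + d ≤ f b' := ih a b' rfl
    have h2 : f b' < f b := hf (by simp [b', Fin.lt_def]; omega)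
    omega

lemma exists_spread {S : Finset ℕ} {m r : ℕ} (hr : 1 ≤ r) (hm : 1 ≤ m)
    (h : m * r ≤ S.card) :
    ∃ t : Fin m → ℕ, (∀ i, t i ∈ S) ∧ ∀ i j : Fin m, i < j → t i + r ≤ t j := by
  have hpos : ∀ i : Fin m, (i : ℕ) * r < S.card := by
    intro i
    have e1 : (i : ℕ) * r + r ≤ m * r := by
      have := Nat.mul_le_mul_right r (Nat.succ_le_of_lt i.isLt)
      rwa [Nat.succ_mul] at this
    omega
  refine ⟨fun i => S.orderEmbOfFin rfl ⟨(i : ℕ) * r, hpos i⟩,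
    fun i => Finset.orderEmbOfFin_mem S rfl _, ?_⟩
  intro i j hij
  dsimp only
  have e2 : (i : ℕ) * r + r ≤ (j : ℕ) * r := by
    have := Nat.mul_le_mul_right r (Nat.succ_le_of_lt hij)
    rwa [Nat.succ_mul] at this
  have hd : ((⟨(i : ℕ) * r, hpos i⟩ : Fin S.card) : ℕ) + ((j : ℕ) * r - (i : ℕ) * r)
      = ((⟨(j : ℕ) * r, hpos j⟩ : Fin S.card) : ℕ) := by
    simp only [Fin.val_mk]
    omega
  have h3 := strictMono_nat_gap (S.orderEmbOfFin rfl).strictMono _ _ _ hd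
  omega


variable {Ω : Type*} [MeasurableSpace Ω] (μ : Measure Ω) [IsProbabilityMeasure μ]
  (T : Ω → Ω) (χ : Ω → ℝ)

lemma distF_mono : Monotone (distF μ χ) := fun a b hab =>
  ENNReal.toReal_mono (measure_ne_top _ _)
    (measure_mono fun ω (h : χ ω ≤ a) => le_trans h hab)

lemma tail_eq (hχm : Measurable χ) (x : ℝ) :
    (μ {ω | x < χ ω}).toReal = 1 - distF μ χ x := by
  have hs : MeasurableSet {ω | χ ω ≤ x} := hχm measurableSet_Iic
  have h : {ω | x < χ ω} = {ω | χ ω ≤ x}ᶜ := by ext ω; simp [not_le]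
  rw [h, measure_compl hs (measure_ne_top _ _), measure_univ,
    ENNReal.toReal_sub_of_le prob_le_one ENNReal.one_ne_top, ENNReal.toReal_one]
  rfl

lemma distF_genInv_ge (hχm : Measurable χ) (hχ0 : ∀ ω, 0 ≤ χ ω) {y : ℝ} (hy0 : 0 < y)
    (hex : ∃ x, y ≤ distF μ χ x) : y ≤ distF μ χ (genInv (distF μ χ) y) := by
  set F := distF μ χ with hF
  set S := {x : ℝ | y ≤ F x} with hS
  have hSne : S.Nonempty := hex
  have hSbdd : BddBelow S := by
    refine ⟨0, fun x hx => ?_⟩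
    by_contra hneg
    push_neg at hneg
    have hempty : {ω | χ ω ≤ x} = ∅ := by
      ext ω; simp only [Set.mem_setOf_eq, Set.mem_empty_iff_false, iff_false, not_le]
      exact lt_of_lt_of_le hneg (hχ0 ω)
    have : F x = 0 := by simp [hF, distF, hempty]
    have := hx
    rw [hS] at this
    simp only [Set.mem_setOf_eq] at this
    linarith
  set g := sInf S with hg
  have hstep : ∀ j : ℕ, ENNReal.ofReal y ≤ μ {ω | χ ω ≤ g + 1 / (j + 1)} := by
    intro j
    have hpos : (0 : ℝ) < 1 / (j + 1 : ℝ) := by positivity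
    obtain ⟨s, hsS, hslt⟩ := (csInf_lt_iff hSbdd hSne).mp (lt_add_of_pos_right g hpos)
    have h1 : y ≤ F (g + 1 / (j + 1)) :=
      le_trans hsS (distF_mono μ χ (le_of_lt hslt))
    exact ENNReal.ofReal_le_of_le_toReal h1
  have htend : Tendsto (fun j : ℕ => μ {ω | χ ω ≤ g + 1 / (j + 1)}) atTop
      (𝓝 (μ {ω | χ ω ≤ g})) := by
    have hiInter : (⋂ j : ℕ, {ω | χ ω ≤ g + 1 / (j + 1)}) = {ω | χ ω ≤ g} := by
      ext ω
      simp only [Set.mem_iInter, Set.mem_setOf_eq]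
      constructor
      · intro h
        by_contra hlt
        push_neg at hlt
        obtain ⟨j, hj⟩ := exists_nat_one_div_lt (sub_pos.mpr hlt)
        have := h j
        push_cast at hj this
        linarith
      · intro h j
        have : (0:ℝ) < 1 / (j + 1 : ℝ) := by positivity
        linarith
    have := tendsto_measure_iInter_atTop
      (s := fun j : ℕ => {ω | χ ω ≤ g + 1 / (j + 1)})
      (fun j => (hχm measurableSet_Iic).nullMeasurableSet)
      (fun a b hab => by
        intro ω hω
        simp only [Set.mem_setOf_eq] at hω ⊢
        have h1 : (1 : ℝ) / (b + 1) ≤ 1 / (a + 1) := by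
          apply one_div_le_one_div_of_le (by positivity)
          push_cast; linarith [(Nat.cast_le (α := ℝ)).mpr hab]
        linarith)
      ⟨0, measure_ne_top μ _⟩
    rwa [hiInter] at this
  have hlim : ENNReal.ofReal y ≤ μ {ω | χ ω ≤ g} := ge_of_tendsto' htend hstep
  have : y ≤ (μ {ω | χ ω ≤ g}).toReal :=
    (ENNReal.ofReal_le_iff_le_toReal (measure_ne_top _ _)).mp hlim
  exact this

lemma exists_distF_ge (hχm : Measurable χ) {δ : ℝ} (hδ : 0 < δ) :
    ∃ x : ℝ, 1 - δ ≤ distF μ χ x := by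
  have htend : Tendsto (fun j : ℕ => μ {ω | (j : ℝ) < χ ω}) atTop (𝓝 0) := by
    have hiInter : (⋂ j : ℕ, {ω | (j : ℝ) < χ ω}) = ∅ := by
      ext ω
      simp only [Set.mem_iInter, Set.mem_setOf_eq, Set.mem_empty_iff_false, iff_false, not_forall,
        not_lt]
      obtain ⟨j, hj⟩ := exists_nat_gt (χ ω)
      exact ⟨j, le_of_lt hj⟩
    have := tendsto_measure_iInter_atTop
      (s := fun j : ℕ => {ω | (j : ℝ) < χ ω})
      (fun j => (hχm measurableSet_Ioi).nullMeasurableSet)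
      (fun a b hab ω hω => by
        simp only [Set.mem_setOf_eq] at hω ⊢
        exact lt_of_le_of_lt (Nat.cast_le.mpr hab) hω)
      ⟨0, measure_ne_top μ _⟩
    rwa [hiInter, measure_empty] at this
  have hev : ∀ᶠ j : ℕ in atTop, μ {ω | (j : ℝ) < χ ω} < ENNReal.ofReal δ :=
    htend.eventually (Iio_mem_nhds (by simpa using ENNReal.ofReal_pos.mpr hδ))
  obtain ⟨j, hj⟩ := hev.exists
  refine ⟨j, ?_⟩
  have h1 : (μ {ω | (j : ℝ) < χ ω}).toReal ≤ δ :=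
    ENNReal.toReal_le_of_le_ofReal (le_of_lt hδ) (le_of_lt hj)
  have h2 := tail_eq μ χ hχm (j : ℝ)
  linarith

lemma psi_two {r : ℕ} (hψ : psiCoeff μ T χ r < 1) {k : ℕ} (hk : 1 ≤ k)
    {B C : Set Ω} (hB : MeasurableSet[sigmaIcc T χ 1 k] B)
    (hC : MeasurableSet[sigmaIci T χ (k + r)] C) :
    (μ (B ∩ C)).toReal ≤ 2 * ((μ B).toReal * (μ C).toReal) := by
  by_cases hB0 : μ B = 0
  · have h0 : μ (B ∩ C) = 0 := measure_mono_null Set.inter_subset_left hB0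
    simp [h0]
    positivity
  by_cases hC0 : μ C = 0
  · have h0 : μ (B ∩ C) = 0 := measure_mono_null Set.inter_subset_right hC0
    simp [h0]
    positivity
  have h1 : ENNReal.ofReal |(μ (B ∩ C)).toReal / ((μ B).toReal * (μ C).toReal) - 1|
      ≤ psiDep μ (sigmaIcc T χ 1 k) (sigmaIci T χ (k + r)) := by
    apply le_iSup_of_le B
    apply le_iSup_of_le C
    apply le_iSup_of_le hB
    apply le_iSup_of_le hC
    apply le_iSup_of_le (pos_iff_ne_zero.mpr hB0)
    exact le_iSup_of_le (pos_iff_ne_zero.mpr hC0) le_rfl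
  have h2 : psiDep μ (sigmaIcc T χ 1 k) (sigmaIci T χ (k + r)) ≤ psiCoeff μ T χ r :=
    le_iSup_of_le k (le_iSup_of_le hk le_rfl)
  have h3 := lt_of_le_of_lt (h1.trans h2) hψ
  rw [ENNReal.ofReal_lt_one] at h3
  have hBpos : 0 < (μ B).toReal := ENNReal.toReal_pos hB0 (measure_ne_top _ _)
  have hCpos : 0 < (μ C).toReal := ENNReal.toReal_pos hC0 (measure_ne_top _ _)
  have h4 : (μ (B ∩ C)).toReal / ((μ B).toReal * (μ C).toReal) < 2 := by
    have := abs_lt.mp h3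
    linarith [this.2]
  exact le_of_lt ((div_lt_iff₀ (mul_pos hBpos hCpos)).mp h4)

lemma event_mem_Icc (c : ℝ) {j J K : ℕ} (hJ : J ≤ j) (hK : j ≤ K) :
    MeasurableSet[sigmaIcc T χ J K] {ω | c < χ (T^[j - 1] ω)} := by
  have h0 : MeasurableSet[MeasurableSpace.comap (fun ω => χ (T^[j - 1] ω)) inferInstance]
      {ω | c < χ (T^[j - 1] ω)} := ⟨Set.Ioi c, measurableSet_Ioi, rfl⟩
  have hle : MeasurableSpace.comap (fun ω => χ (T^[j - 1] ω)) inferInstance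
      ≤ sigmaIcc T χ J K := le_biSup
        (fun k => MeasurableSpace.comap (fun ω => χ (T^[k - 1] ω)) inferInstance) ⟨hJ, hK⟩
  exact hle _ h0

lemma event_mem_Ici (c : ℝ) {j J : ℕ} (hJ : J ≤ j) :
    MeasurableSet[sigmaIci T χ J] {ω | c < χ (T^[j - 1] ω)} := by
  have h0 : MeasurableSet[MeasurableSpace.comap (fun ω => χ (T^[j - 1] ω)) inferInstance]
      {ω | c < χ (T^[j - 1] ω)} := ⟨Set.Ioi c, measurableSet_Ioi, rfl⟩
  have hle : MeasurableSpace.comap (fun ω => χ (T^[j - 1] ω)) inferInstance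
      ≤ sigmaIci T χ J := le_biSup
        (fun k => MeasurableSpace.comap (fun ω => χ (T^[k - 1] ω)) inferInstance)
        (Set.mem_Ici.mpr hJ)
  exact hle _ h0

lemma meas_event (hT : MeasurePreserving T μ μ) (hχm : Measurable χ) (c : ℝ) (j : ℕ) :
    μ {ω | c < χ (T^[j] ω)} = μ {ω | c < χ ω} :=
  (hT.iterate j).measure_preimage (hχm measurableSet_Ioi).nullMeasurableSet

lemma inter_bound (hT : MeasurePreserving T μ μ) (hχm : Measurable χ)
    {r : ℕ} (hψ : psiCoeff μ T χ r < 1) (c : ℝ) :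
    ∀ (m : ℕ) (t : Fin (m + 1) → ℕ), (∀ i, 1 ≤ t i) →
      (∀ i j : Fin (m + 1), i < j → t i + r ≤ t j) →
      (μ (⋂ i, {ω | c < χ (T^[t i - 1] ω)})).toReal
        ≤ 2 ^ m * (μ {ω | c < χ ω}).toReal ^ (m + 1) := by
  intro m
  induction m with
  | zero =>
    intro t h1 hgap
    have h : (⋂ i : Fin 1, {ω | c < χ (T^[t i - 1] ω)}) = {ω | c < χ (T^[t 0 - 1] ω)} := by
      ext ω; simp [Fin.forall_fin_one]
    rw [h, meas_event μ T χ hT hχm c (t 0 - 1)]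
    simp
  | succ m ih =>
    intro t h1 hgap
    set p := (μ {ω | c < χ ω}).toReal with hp
    set B := ⋂ i : Fin (m + 1), {ω | c < χ (T^[t i.castSucc - 1] ω)} with hBdef
    set C := {ω | c < χ (T^[t (Fin.last (m + 1)) - 1] ω)} with hCdef
    have hsplit : (⋂ i, {ω | c < χ (T^[t i - 1] ω)}) = B ∩ C := by
      ext ω
      simp only [Set.mem_iInter, Set.mem_inter_iff, hBdef, hCdef, Set.mem_setOf_eq]
      constructor
      · exact fun h => ⟨fun i => h _, h _⟩
      · rintro ⟨hx, hy⟩ i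
        induction i using Fin.lastCases with
        | last => exact hy
        | cast i => exact hx i
    have hmono : ∀ i j : Fin (m + 2), i ≤ j → t i ≤ t j := by
      intro i j hij
      rcases eq_or_lt_of_le hij with h | h
      · rw [h]
      · have := hgap i j h; omega
    set K := t ((Fin.last m).castSucc) with hKdef
    have hK1 : 1 ≤ K := h1 _
    have hBmeas : MeasurableSet[sigmaIcc T χ 1 K] B :=
      MeasurableSet.iInter fun i =>
        event_mem_Icc T χ c (h1 _)
          (hmono _ _ (Fin.castSucc_le_castSucc_iff.mpr (Fin.le_last i)))
    have hCmeas : MeasurableSet[sigmaIci T χ (K + r)] C :=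
      event_mem_Ici T χ c (hgap _ _ (Fin.castSucc_lt_last (Fin.last m)))
    have hmain := psi_two μ T χ hψ hK1 hBmeas hCmeas
    have hC : (μ C).toReal = p := congrArg ENNReal.toReal
      (meas_event μ T χ hT hχm c (t (Fin.last (m + 1)) - 1))
    have hB : (μ B).toReal ≤ 2 ^ m * p ^ (m + 1) :=
      ih (fun i => t i.castSucc) (fun i => h1 _)
        (fun i j hij => hgap _ _ (Fin.castSucc_lt_castSucc_iff.mpr hij))
    have hp0 : 0 ≤ p := ENNReal.toReal_nonneg
    calc (μ (⋂ i, {ω | c < χ (T^[t i - 1] ω)})).toReal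
        = (μ (B ∩ C)).toReal := by rw [hsplit]
      _ ≤ 2 * ((μ B).toReal * (μ C).toReal) := hmain
      _ ≤ 2 * ((2 ^ m * p ^ (m + 1)) * p) := by
          rw [hC]
          have := mul_le_mul_of_nonneg_right hB hp0
          linarith
      _ = 2 ^ (m + 1) * p ^ (m + 2) := by ring

end AuxLemmas

set_option maxHeartbeats 1000000 in
theorem Upsilon_kn_bound
    {Ω : Type*} [MeasurableSpace Ω] (μ : Measure Ω) [IsProbabilityMeasure μ]
    (T : Ω → Ω) (hT : MeasurePreserving T μ μ)
    (χ : Ω → ℝ) (hχm : Measurable χ) (hχ0 : ∀ ω, 0 ≤ χ ω)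
    (L : ℝ → ℝ) (hL : SlowlyVarying L) (hLpos : ∀ x : ℝ, 0 < x → 0 < L x)
    {α : ℝ} (hα0 : 0 < α) (hα1 : α < 1)
    (htail : ∀ x : ℝ, 0 < x → (μ {ω | x < χ ω}).toReal = L x / x ^ α)
    (b : ℕ → ℕ) (hb : Tendsto b atTop atTop)
    (hbo : Tendsto (fun n => (b n : ℝ) / (n : ℝ)) atTop (𝓝 0))
    (r : ℕ) (hr1 : 1 ≤ r) (hrψ : psiCoeff μ T χ r < 1)
    (hrmin : ∀ m : ℕ, 1 ≤ m → m < r → 1 ≤ psiCoeff μ T χ m)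
    :
    ∃ N : ℕ, ∀ n ≥ N, ∀ k : ℕ, 2 ≤ k →
      (μ {ω | (⌊2 / α⌋₊ + 1) * r ≤
        ((Finset.Icc 1 n).filter fun j =>
          2 ^ (k - 1) * gSeq μ χ b n < χ (T^[j - 1] ω)).card}).toReal ≤
      2 ^ (⌊2 / α⌋₊ + 1 - 1) *
        (2 * (b n : ℝ) / 2 ^ ((k : ℝ) * α / 2)) ^ (⌊2 / α⌋₊ + 1) := by
  classical
  set mm := ⌊2 / α⌋₊ with hmmdef
  have hα2 : 0 < α / 2 := by linarith
  have h2half_pos : (0:ℝ) < (2:ℝ) ^ (α / 2) := Real.rpow_pos_of_pos two_pos _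
  have h2half : (1:ℝ) < (2:ℝ) ^ (α / 2) := by
    have h := Real.rpow_lt_rpow_of_exponent_lt (x := 2) one_lt_two hα2
    rwa [Real.rpow_zero] at h
  have h2half_le2 : (2:ℝ) ^ (α / 2) ≤ 2 := by
    have h := Real.rpow_le_rpow_of_exponent_le (x := 2) one_le_two
      (show α / 2 ≤ (1:ℝ) by linarith)
    rwa [Real.rpow_one] at h
  obtain ⟨X₀, hX₀⟩ := Filter.eventually_atTop.mp
    ((hL 2 two_pos).eventually (Iio_mem_nhds h2half))
  set X := max X₀ 1 with hXdef
  have hX1 : (1:ℝ) ≤ X := le_max_right _ _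
  have hX0 : (0:ℝ) < X := by linarith
  have hLstep : ∀ x : ℝ, X ≤ x → L (2 * x) ≤ (2:ℝ) ^ (α / 2) * L x := by
    intro x hx
    have hx0 : 0 < x := lt_of_lt_of_le hX0 hx
    have h := hX₀ x (le_trans (le_max_left _ _) hx)
    exact le_of_lt ((div_lt_iff₀ (hLpos x hx0)).mp h)
  have hFX : distF μ χ X < 1 := by
    have h1 := tail_eq μ χ hχm X
    have h2 := htail X hX0
    have h3 : 0 < L X / X ^ α := div_pos (hLpos X hX0) (Real.rpow_pos_of_pos hX0 α)
    rw [h1] at h2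
    linarith
  set δ := 1 - distF μ χ X with hδdef
  have hδ : 0 < δ := by simp only [hδdef]; linarith
  have hev1 : ∀ᶠ n in atTop, 2 ≤ b n := hb.eventually_ge_atTop 2
  have hev2 : ∀ᶠ n : ℕ in atTop, (b n : ℝ) / (n : ℝ) < δ :=
    hbo.eventually (Iio_mem_nhds hδ)
  have hev3 : ∀ᶠ n : ℕ in atTop, 1 ≤ n := Filter.eventually_ge_atTop 1
  obtain ⟨N, hN⟩ := Filter.eventually_atTop.mp ((hev1.and hev2).and hev3)
  refine ⟨N, ?_⟩
  intro n hn k hk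
  obtain ⟨⟨hb2, hbδ⟩, hn1⟩ := hN n hn
  set bR := (b n : ℝ) with hbRdef
  have hbR2 : (2:ℝ) ≤ bR := by rw [hbRdef]; exact_mod_cast hb2
  have hnR : (1:ℝ) ≤ (n:ℝ) := by exact_mod_cast hn1
  have hnpos : (0:ℝ) < (n:ℝ) := by linarith
  set ζ := bR ^ ((2:ℝ) / 3) with hζdef
  have hζpos : 0 < ζ := Real.rpow_pos_of_pos (by linarith) _
  have hζlt : ζ < bR := by
    have h := Real.rpow_lt_rpow_of_exponent_lt (show (1:ℝ) < bR by linarith)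
      (show (2:ℝ)/3 < 1 by norm_num)
    rw [Real.rpow_one] at h
    exact h
  set y := 1 - (bR - ζ) / (n : ℝ) with hydef
  have hfrac_pos : 0 < (bR - ζ) / (n : ℝ) := div_pos (by linarith) hnpos
  have hfrac_lt : (bR - ζ) / (n : ℝ) < δ := by
    have h1 : (bR - ζ) / (n : ℝ) ≤ bR / (n : ℝ) :=
      (div_le_div_iff_of_pos_right hnpos).mpr (by linarith)
    exact lt_of_le_of_lt h1 hbδ
  have hy1 : y < 1 := by rw [hydef]; linarith
  have hyFX : distF μ χ X < y := by rw [hydef]; rw [hδdef] at hfrac_lt; linarith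
  have hy0 : 0 < y := by
    have hF0 : 0 ≤ distF μ χ X := ENNReal.toReal_nonneg
    linarith
  set g := gSeq μ χ b n with hgdef
  have hgy : g = genInv (distF μ χ) y := rfl
  have hex : ∃ x, y ≤ distF μ χ x := by
    obtain ⟨x, hx⟩ := exists_distF_ge μ χ hχm (show 0 < 1 - y by linarith)
    exact ⟨x, by linarith⟩
  have hFg : y ≤ distF μ χ g := by
    rw [hgy]; exact distF_genInv_ge μ χ hχm hχ0 hy0 hex
  have hgX : X ≤ g := by
    rw [hgy]
    apply le_csInf hex
    intro x hx
    by_contra hlt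
    push_neg at hlt
    have hmono : distF μ χ x ≤ distF μ χ X := distF_mono μ χ (le_of_lt hlt)
    have hxy : y ≤ distF μ χ x := hx
    linarith
  have hg1 : (1:ℝ) ≤ g := le_trans hX1 hgX
  have hg0 : (0:ℝ) < g := by linarith
  have htg : (n : ℝ) * (L g / g ^ α) ≤ bR := by
    have h1 := htail g hg0
    have h2 := tail_eq μ χ hχm g
    rw [h2] at h1
    have h3 : L g / g ^ α ≤ (bR - ζ) / (n : ℝ) := by
      rw [hydef] at hFg; linarith
    calc (n : ℝ) * (L g / g ^ α) ≤ (n : ℝ) * ((bR - ζ) / (n : ℝ)) :=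
          mul_le_mul_of_nonneg_left h3 (by linarith)
      _ = bR - ζ := by field_simp
      _ ≤ bR := by linarith
  have hchain : ∀ j : ℕ, L (2 ^ j * g) ≤ (2:ℝ) ^ ((j : ℝ) * (α / 2)) * L g := by
    intro j
    induction j with
    | zero => simp
    | succ j ihj =>
      have h2j : (1:ℝ) ≤ 2 ^ j := one_le_pow₀ one_le_two
      have hx : X ≤ 2 ^ j * g :=
        le_trans hgX (le_mul_of_one_le_left (by linarith) h2j)
      have hstep := hLstep _ hx
      have heq : (2:ℝ) ^ (j + 1) * g = 2 * (2 ^ j * g) := by ring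
      rw [heq]
      have hcast : ((j : ℝ) + 1) * (α / 2) = α / 2 + (j : ℝ) * (α / 2) := by ring
      calc L (2 * (2 ^ j * g)) ≤ (2:ℝ) ^ (α / 2) * L (2 ^ j * g) := hstep
        _ ≤ (2:ℝ) ^ (α / 2) * ((2:ℝ) ^ ((j : ℝ) * (α / 2)) * L g) :=
            mul_le_mul_of_nonneg_left ihj (le_of_lt h2half_pos)
        _ = (2:ℝ) ^ (((j : ℕ) + 1 : ℝ) * (α / 2)) * L g := by
            rw [← mul_assoc, ← Real.rpow_add two_pos, hcast]
        _ = (2:ℝ) ^ (((j + 1 : ℕ) : ℝ) * (α / 2)) * L g := by push_cast; ring_nf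
  set c := (2:ℝ) ^ (k - 1) * g with hcdef
  have hc0 : (0:ℝ) < c := mul_pos (pow_pos two_pos _) hg0
  set p := (μ {ω | c < χ ω}).toReal with hpdef
  have hp0 : 0 ≤ p := ENNReal.toReal_nonneg
  set a := ((k - 1 : ℕ) : ℝ) with hadef
  have ha0 : 0 ≤ a := Nat.cast_nonneg _
  have hcα : c ^ α = (2:ℝ) ^ (a * α) * g ^ α := by
    rw [hcdef, Real.mul_rpow (by positivity) (le_of_lt hg0)]
    congr 1
    rw [← Real.rpow_natCast 2 (k - 1), ← Real.rpow_mul (by norm_num)]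
  have hLc : L c ≤ (2:ℝ) ^ (a * (α / 2)) * L g := by
    have := hchain (k - 1)
    rw [← hadef] at this
    exact this
  have hgα : (0:ℝ) < g ^ α := Real.rpow_pos_of_pos hg0 α
  have h2aα : (0:ℝ) < (2:ℝ) ^ (a * α) := Real.rpow_pos_of_pos two_pos _
  have hp_eq : p = L c / c ^ α := by rw [hpdef, htail c hc0]
  have hnp : (n : ℝ) * p ≤ bR * (2:ℝ) ^ (-(a * (α / 2))) := by
    have h1 : p ≤ ((2:ℝ) ^ (a * (α / 2)) * L g) / ((2:ℝ) ^ (a * α) * g ^ α) := by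
      rw [hp_eq, hcα]
      exact (div_le_div_iff_of_pos_right (mul_pos h2aα hgα)).mpr hLc
    have h2 : ((2:ℝ) ^ (a * (α / 2)) * L g) / ((2:ℝ) ^ (a * α) * g ^ α)
        = (2:ℝ) ^ (-(a * (α / 2))) * (L g / g ^ α) := by
      rw [show -(a * (α / 2)) = a * (α / 2) - a * α by ring, Real.rpow_sub two_pos]
      field_simp
    have h5 : (0:ℝ) < (2:ℝ) ^ (-(a * (α / 2))) := Real.rpow_pos_of_pos two_pos _
    calc (n : ℝ) * p ≤ (n : ℝ) * ((2:ℝ) ^ (-(a * (α / 2))) * (L g / g ^ α)) := by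
          apply mul_le_mul_of_nonneg_left _ (by linarith)
          rw [← h2]; exact h1
      _ = ((n : ℝ) * (L g / g ^ α)) * (2:ℝ) ^ (-(a * (α / 2))) := by ring
      _ ≤ bR * (2:ℝ) ^ (-(a * (α / 2))) :=
          mul_le_mul_of_nonneg_right htg (le_of_lt h5)
  have hka : a = (k : ℝ) - 1 := by
    rw [hadef, Nat.cast_sub (by omega : 1 ≤ k)]; norm_num
  have hden : (0:ℝ) < (2:ℝ) ^ ((k : ℝ) * α / 2) := Real.rpow_pos_of_pos two_pos _
  have htarget : (n : ℝ) * p ≤ 2 * bR / (2:ℝ) ^ ((k : ℝ) * α / 2) := by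
    have h6 : (2:ℝ) ^ (-(a * (α / 2))) = (2:ℝ) ^ (α / 2) / (2:ℝ) ^ ((k : ℝ) * α / 2) := by
      have hexp : -(a * (α / 2)) = α / 2 - (k : ℝ) * α / 2 := by rw [hka]; ring
      rw [hexp, Real.rpow_sub two_pos]
    have h7 : bR * (2:ℝ) ^ (-(a * (α / 2))) ≤ 2 * bR / (2:ℝ) ^ ((k : ℝ) * α / 2) := by
      rw [h6, ← mul_div_assoc]
      apply (div_le_div_iff_of_pos_right hden).mpr
      calc bR * (2:ℝ) ^ (α / 2) ≤ bR * 2 :=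
            mul_le_mul_of_nonneg_left h2half_le2 (by linarith)
        _ = 2 * bR := by ring
    exact le_trans hnp h7
  -- combinatorial union bound
  set A : ℕ → Set Ω := fun j => {ω | c < χ (T^[j - 1] ω)} with hAdef
  set 𝒯 : Finset (Fin (mm + 1) → ℕ) :=
    (Fintype.piFinset fun _ : Fin (mm + 1) => Finset.Icc 1 n).filter
      (fun t => ∀ i j : Fin (mm + 1), i < j → t i + r ≤ t j) with hTdef
  have hsub : {ω | (mm + 1) * r ≤ ((Finset.Icc 1 n).filter
      (fun j => c < χ (T^[j - 1] ω))).card} ⊆ ⋃ t ∈ 𝒯, ⋂ i, A (t i) := by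
    intro ω hω
    obtain ⟨t, htS, htgap⟩ := exists_spread hr1 (Nat.succ_le_succ (Nat.zero_le mm)) hω
    have hmem : ∀ i, t i ∈ Finset.Icc 1 n ∧ c < χ (T^[t i - 1] ω) := by
      intro i
      have h := Finset.mem_filter.mp (htS i)
      exact ⟨h.1, h.2⟩
    exact Set.mem_biUnion
      (Finset.mem_filter.mpr ⟨Fintype.mem_piFinset.mpr fun i => (hmem i).1, htgap⟩)
      (Set.mem_iInter.mpr fun i => (hmem i).2)
  have hμsub : μ {ω | (mm + 1) * r ≤ ((Finset.Icc 1 n).filter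
        (fun j => c < χ (T^[j - 1] ω))).card}
      ≤ ∑ t ∈ 𝒯, μ (⋂ i, A (t i)) :=
    le_trans (measure_mono hsub) (measure_biUnion_finset_le 𝒯 _)
  have hterm : ∀ t ∈ 𝒯, (μ (⋂ i, A (t i))).toReal ≤ 2 ^ mm * p ^ (mm + 1) := by
    intro t ht
    obtain ⟨hpi, hgap⟩ := Finset.mem_filter.mp ht
    have h1 : ∀ i, 1 ≤ t i := fun i =>
      (Finset.mem_Icc.mp (Fintype.mem_piFinset.mp hpi i)).1
    exact inter_bound μ T χ hT hχm hrψ c mm t h1 hgap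
  have hsum : (μ {ω | (mm + 1) * r ≤ ((Finset.Icc 1 n).filter
        (fun j => c < χ (T^[j - 1] ω))).card}).toReal
      ≤ (𝒯.card : ℝ) * (2 ^ mm * p ^ (mm + 1)) := by
    calc (μ {ω | (mm + 1) * r ≤ ((Finset.Icc 1 n).filter
          (fun j => c < χ (T^[j - 1] ω))).card}).toReal
        ≤ (∑ t ∈ 𝒯, μ (⋂ i, A (t i))).toReal :=
          ENNReal.toReal_mono
            (ENNReal.sum_lt_top.mpr fun t _ => measure_lt_top μ _).ne hμsub
      _ = ∑ t ∈ 𝒯, (μ (⋂ i, A (t i))).toReal :=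
          ENNReal.toReal_sum fun t _ => measure_ne_top μ _
      _ ≤ ∑ _t ∈ 𝒯, (2 ^ mm * p ^ (mm + 1)) := Finset.sum_le_sum hterm
      _ = (𝒯.card : ℝ) * (2 ^ mm * p ^ (mm + 1)) := by
          rw [Finset.sum_const, nsmul_eq_mul]
  have hcard : ((𝒯.card : ℕ) : ℝ) ≤ ((n : ℝ)) ^ (mm + 1) := by
    have h1 : 𝒯.card ≤ (Fintype.piFinset fun _ : Fin (mm + 1) => Finset.Icc 1 n).card :=
      Finset.card_filter_le _ _
    have h2 : (Fintype.piFinset fun _ : Fin (mm + 1) => Finset.Icc 1 n).card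
        = n ^ (mm + 1) := by
      rw [Fintype.card_piFinset]
      simp [Nat.card_Icc]
    have h3 : 𝒯.card ≤ n ^ (mm + 1) := h2 ▸ h1
    calc ((𝒯.card : ℕ) : ℝ) ≤ ((n ^ (mm + 1) : ℕ) : ℝ) := by exact_mod_cast h3
      _ = ((n : ℝ)) ^ (mm + 1) := by push_cast; ring
  have hbound_nonneg : (0:ℝ) ≤ 2 ^ mm * p ^ (mm + 1) := by positivity
  have hnp0 : (0:ℝ) ≤ (n : ℝ) * p := mul_nonneg (by linarith) hp0
  have hfinal : (μ {ω | (mm + 1) * r ≤ ((Finset.Icc 1 n).filter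
        (fun j => c < χ (T^[j - 1] ω))).card}).toReal
      ≤ 2 ^ mm * (2 * bR / (2:ℝ) ^ ((k : ℝ) * α / 2)) ^ (mm + 1) := by
    calc (μ {ω | (mm + 1) * r ≤ ((Finset.Icc 1 n).filter
          (fun j => c < χ (T^[j - 1] ω))).card}).toReal
        ≤ (𝒯.card : ℝ) * (2 ^ mm * p ^ (mm + 1)) := hsum
      _ ≤ ((n : ℝ)) ^ (mm + 1) * (2 ^ mm * p ^ (mm + 1)) :=
          mul_le_mul_of_nonneg_right hcard hbound_nonneg
      _ = 2 ^ mm * ((n : ℝ) * p) ^ (mm + 1) := by rw [mul_pow]; ring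
      _ ≤ 2 ^ mm * (2 * bR / (2:ℝ) ^ ((k : ℝ) * α / 2)) ^ (mm + 1) := by
          apply mul_le_mul_of_nonneg_left _ (by positivity)
          exact pow_le_pow_left₀ hnp0 htarget _
  rw [show mm + 1 - 1 = mm from rfl]
  exact hfinal
end

section
/- Let (Ω,𝒜,μ) be a probability space and χ:Ω→[0,∞) measurable with μ(χ>x)=L(x)/x^α for all x>0, where L is slowly varying and 0<α<1. Let (b_n) be natural numbers tending to infinity with b_n=o(n), put ζ_n := b_n^{2/3}, g_n := F^←(1−(b_n−ζ_n)/n), and d_n := (α/(1-α))·n^{1/α}·b_n^{1-1/α}·ℓ^#((n/b_n)^{1/α}). Then d_n ∼ (α/(1−α))·b_n·g_n as n→∞, i.e. lim_{n→∞} d_n/(b_n·g_n) = α/(1−α). -/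
open MeasureTheory Filter Topology ENNReal

/-!
Write `F̄ = 1 - F` for the tail, so that `g_n` is the generalized inverse of `F̄` at the level
`t_n = (b_n - ζ_n)/n ∼ b_n/n = u_n^{-α}`, where `u_n = (n/b_n)^{1/α} → ∞`. The de Bruijn conjugate
inverts the regularly varying tail `F̄(x) = L(x) x^{-α}`: with `w_n = u_n ℓ^#(u_n)` one gets
`F̄(c w_n) u_n^α → c^{-α}` for every `c > 0`. Hence `F̄(c w_n) < t_n` eventually when `c > 1` and
`F̄(c w_n) > t_n` when `c < 1`, which squeezes `g_n / w_n → 1`; finally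
`d_n = (α/(1-α)) b_n w_n` is an algebraic identity.
-/

section SlowVariation

variable {ι : Type*} {l : Filter ι}

theorem SlowlyVarying.eventually_pos {f : ℝ → ℝ} (hf : SlowlyVarying f)
    (hfreq : ∃ᶠ x in atTop, 0 < f x) :
    ∀ᶠ x in atTop, 0 < f x := by
  have pos_iff_of_div_pos : ∀ {a b : ℝ}, 0 < a / b → (0 < a ↔ 0 < b) := fun h => by
    rcases div_pos_iff.1 h with ⟨ha, hb⟩ | ⟨ha, hb⟩
    · exact iff_of_true ha hb
    · exact iff_of_false ha.not_gt hb.not_gt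
  -- `f (2x) / f x → 1` freezes the sign of `f` along each orbit `x, 2x, 4x, …`.
  have hsign : ∀ᶠ x in atTop, ∀ k : ℕ, (0 < f (2 ^ k * x) ↔ 0 < f x) := by
    obtain ⟨A, hA⟩ := eventually_atTop.1
      ((hf 2 two_pos).eventually (eventually_gt_nhds one_pos))
    filter_upwards [eventually_ge_atTop (max A 0)] with x hx k
    induction k with
    | zero => simp
    | succ k ih =>
      have hkx : A ≤ 2 ^ k * x := (le_max_left A 0).trans (hx.trans
        (le_mul_of_one_le_left ((le_max_right A 0).trans hx) (one_le_pow₀ one_le_two)))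
      rw [pow_succ, mul_comm _ (2 : ℝ), mul_assoc, pos_iff_of_div_pos (hA _ hkx), ih]
  by_contra hcon
  obtain ⟨p, hp, hp_sign, hp0⟩ :=
    (hfreq.and_eventually (hsign.and (eventually_gt_atTop 0))).exists
  obtain ⟨q, hq, hq_sign, hq0⟩ :=
    ((not_eventually.1 hcon).and_eventually (hsign.and (eventually_gt_atTop 0))).exists
  -- Comparing the orbits of `p` and `q` through `f (q/p · y) / f y → 1` equates their signs.
  have horbit : Tendsto (fun k : ℕ => (2 : ℝ) ^ k * p) atTop atTop :=
    (tendsto_pow_atTop_atTop_of_one_lt (one_lt_two (α := ℝ))).atTop_mul_const hp0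
  obtain ⟨k, hk⟩ := (horbit.eventually
    ((hf (q / p) (div_pos hq0 hp0)).eventually (eventually_gt_nhds one_pos))).exists
  rw [show q / p * (2 ^ k * p) = 2 ^ k * q by field_simp] at hk
  exact hq ((hq_sign k).1 ((pos_iff_of_div_pos hk).2 ((hp_sign k).2 hp)))

theorem IsDeBruijnConjugate.eventually_pos {Lt ls : ℝ → ℝ} (h : IsDeBruijnConjugate Lt ls)
    (hLt : ∀ᶠ x in atTop, 0 < Lt x) (hgrow : Tendsto (fun x => x * Lt x) atTop atTop) :
    ∀ᶠ x in atTop, 0 < ls x := by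
  refine h.1.eventually_pos (hgrow.frequently (Eventually.frequently ?_))
  filter_upwards [hLt, h.2.1.eventually (eventually_gt_nhds one_pos)] with x hLx hx
  exact pos_of_mul_pos_right hx hLx.le

theorem IsDeBruijnConjugate.tendsto_comp_mul_mul_rpow_neg {L ls : ℝ → ℝ} {α : ℝ} (hα : α ≠ 0)
    (hLpos : ∀ x, 0 < x → 0 < L x) (hls : IsDeBruijnConjugate (fun x => L x ^ (-(1 / α))) ls)
    (hlspos : ∀ᶠ x in atTop, 0 < ls x) {u : ι → ℝ} (hu : Tendsto u l atTop) :
    Tendsto (fun i => L (u i * ls (u i)) * ls (u i) ^ (-α)) l (𝓝 1) := by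
  have h := (hls.2.2.comp hu).rpow_const (p := -α) (Or.inl one_ne_zero)
  rw [Real.one_rpow] at h
  refine h.congr' ?_
  filter_upwards [hu.eventually hlspos, hu.eventually_gt_atTop 0] with i hlsi hui
  have hL := hLpos _ (mul_pos hui hlsi)
  rw [Function.comp_apply, Real.mul_rpow hlsi.le (Real.rpow_nonneg hL.le _), ← Real.rpow_mul hL.le,
    neg_mul_neg, one_div, inv_mul_cancel₀ hα, Real.rpow_one, mul_comm]

end SlowVariation

section RegularlyVaryingTail

variable {ι : Type*} {l : Filter ι} {T L ls : ℝ → ℝ} {α : ℝ}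

theorem Antitone.tendsto_atTop_of_tendsto_comp_zero (hT : Antitone T) (hTpos : ∀ x, 0 < T x)
    {y : ι → ℝ} (hy : Tendsto (fun i => T (y i)) l (𝓝 0)) : Tendsto y l atTop := by
  refine tendsto_atTop.2 fun M => ?_
  filter_upwards [hy.eventually (eventually_lt_nhds (hTpos M))] with i hi
  exact le_of_not_gt fun h => (hT h.le).not_gt hi

theorem pos_of_antitone_of_eq_div_rpow (hT : Antitone T) (hTL : ∀ x, 0 < x → T x = L x / x ^ α)
    (hLpos : ∀ x, 0 < x → 0 < L x) (x : ℝ) : 0 < T x := by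
  have h1 : (0 : ℝ) < max x 1 := lt_max_of_lt_right one_pos
  have h := div_pos (hLpos _ h1) (Real.rpow_pos_of_pos h1 α)
  rw [← hTL _ h1] at h
  exact h.trans_le (hT (le_max_left x 1))

theorem tendsto_mul_rpow_neg_one_div_atTop (hα : 0 < α) (hTL : ∀ x, 0 < x → T x = L x / x ^ α)
    (hLpos : ∀ x, 0 < x → 0 < L x) (hTpos : ∀ x, 0 < T x) (hT0 : Tendsto T atTop (𝓝 0)) :
    Tendsto (fun x => x * L x ^ (-(1 / α))) atTop atTop := by
  have hT0' : Tendsto T atTop (𝓝[>] 0) :=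
    tendsto_nhdsWithin_iff.2 ⟨hT0, Eventually.of_forall hTpos⟩
  refine ((tendsto_rpow_neg_nhdsGT_zero (neg_neg_of_pos (one_div_pos.2 hα))).comp hT0').congr' ?_
  filter_upwards [eventually_gt_atTop 0] with x hx
  rw [Function.comp_apply, hTL x hx, Real.div_rpow (hLpos x hx).le (by positivity),
    ← Real.rpow_mul hx.le, mul_neg, mul_one_div_cancel hα.ne', Real.rpow_neg_one, div_inv_eq_mul,
    mul_comm]

theorem tendsto_tail_mul_rpow (hα : 0 < α) (hT : Antitone T) (hTpos : ∀ x, 0 < T x)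
    (hTL : ∀ x, 0 < x → T x = L x / x ^ α) (hL : SlowlyVarying L)
    (hLpos : ∀ x, 0 < x → 0 < L x) (hls : IsDeBruijnConjugate (fun x => L x ^ (-(1 / α))) ls)
    (hlspos : ∀ᶠ x in atTop, 0 < ls x) {u : ι → ℝ} (hu : Tendsto u l atTop) {c : ℝ} (hc : 0 < c) :
    Tendsto (fun i => T (c * (u i * ls (u i))) * u i ^ α) l (𝓝 (c ^ (-α))) := by
  have hone : Tendsto (fun i => T (u i * ls (u i)) * u i ^ α) l (𝓝 1) := by
    refine (hls.tendsto_comp_mul_mul_rpow_neg hα.ne' hLpos hlspos hu).congr' ?_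
    filter_upwards [hu.eventually hlspos, hu.eventually_gt_atTop 0] with i hlsi hui
    rw [hTL _ (mul_pos hui hlsi), Real.mul_rpow hui.le hlsi.le, Real.rpow_neg hlsi.le]
    have := (Real.rpow_pos_of_pos hui α).ne'
    field_simp
  have hw : Tendsto (fun i => u i * ls (u i)) l atTop := by
    refine hT.tendsto_atTop_of_tendsto_comp_zero hTpos ?_
    have h := hone.mul (tendsto_rpow_atTop hα |>.comp hu).inv_tendsto_atTop
    rw [mul_zero] at h
    refine h.congr' ?_
    filter_upwards [hu.eventually_gt_atTop 0] with i hui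
    have := (Real.rpow_pos_of_pos hui α).ne'
    simp [this]
  have hscale : ∀ x, 0 < x → T (c * x) = L (c * x) / L x * c ^ (-α) * T x := by
    intro x hx
    rw [hTL _ (mul_pos hc hx), hTL x hx, Real.mul_rpow hc.le hx.le, Real.rpow_neg hc.le]
    have := (hLpos x hx).ne'
    field_simp
  have h := (((hL c hc).comp hw).mul_const (c ^ (-α))).mul hone
  rw [one_mul, mul_one] at h
  refine h.congr' ?_
  filter_upwards [hw.eventually_gt_atTop 0] with i hwi
  rw [hscale _ hwi, Function.comp_apply]
  ring

end RegularlyVaryingTail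

section GeneralizedInverse

variable {ι : Type*} {l : Filter ι} {T : ℝ → ℝ}

theorem tendsto_sInf_sublevel_div (hT : Antitone T) {t w : ι → ℝ} (hw : ∀ᶠ i in l, 0 < w i)
    (hup : ∀ c > 1, ∀ᶠ i in l, T (c * w i) ≤ t i)
    (hlow : ∀ c ∈ Set.Ioo (0 : ℝ) 1, ∀ᶠ i in l, t i < T (c * w i)) :
    Tendsto (fun i => sInf {x | T x ≤ t i} / w i) l (𝓝 1) := by
  have hlb : ∀ c ∈ Set.Ioo (0 : ℝ) 1, ∀ᶠ i in l, c * w i ∈ lowerBounds {x | T x ≤ t i} := by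
    intro c hc
    filter_upwards [hlow c hc] with i hi x hx
    exact le_of_not_gt fun hxc => (hT hxc.le).not_gt (lt_of_le_of_lt hx hi)
  have hge : ∀ c ∈ Set.Ioo (0 : ℝ) 1, ∀ᶠ i in l, c * w i ≤ sInf {x | T x ≤ t i} := by
    intro c hc
    filter_upwards [hlb c hc, hup 2 one_lt_two] with i hi h2
    exact le_csInf ⟨_, h2⟩ hi
  have hle : ∀ c > 1, ∀ᶠ i in l, sInf {x | T x ≤ t i} ≤ c * w i := by
    intro c hc
    filter_upwards [hlb (1 / 2) ⟨by norm_num, by norm_num⟩, hup c hc] with i hbdd hmem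
    exact csInf_le ⟨_, hbdd⟩ hmem
  refine tendsto_order.2 ⟨fun a ha => ?_, fun a ha => ?_⟩
  · obtain ⟨c, hac, hc1⟩ := exists_between (max_lt ha one_pos)
    filter_upwards [hge c ⟨(le_max_right _ _).trans_lt hac, hc1⟩, hw] with i hi hwi
    exact ((le_max_left a 0).trans_lt hac).trans_le ((le_div_iff₀ hwi).2 hi)
  · obtain ⟨c, hc1, hca⟩ := exists_between ha
    filter_upwards [hle c hc1, hw] with i hi hwi
    exact ((div_le_iff₀ hwi).2 hi).trans_lt hca

theorem tendsto_sInf_sublevel_div_of_tendsto_mul (hT : Antitone T) {α : ℝ} (hα : 0 < α)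
    {t w s : ι → ℝ} (hw : ∀ᶠ i in l, 0 < w i) (hs : ∀ᶠ i in l, 0 < s i)
    (ht : Tendsto (fun i => t i * s i) l (𝓝 1))
    (hTw : ∀ c > 0, Tendsto (fun i => T (c * w i) * s i) l (𝓝 (c ^ (-α)))) :
    Tendsto (fun i => sInf {x | T x ≤ t i} / w i) l (𝓝 1) := by
  refine tendsto_sInf_sublevel_div hT hw (fun c hc => ?_) (fun c hc => ?_)
  · have hlt : c ^ (-α) < 1 := Real.rpow_lt_one_of_one_lt_of_neg hc (neg_neg_of_pos hα)
    filter_upwards [(hTw c (zero_lt_one.trans hc)).eventually_lt ht hlt, hs] with i hi hsi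
    exact (lt_of_mul_lt_mul_right hi hsi.le).le
  · have hgt : 1 < c ^ (-α) :=
      Real.one_lt_rpow_of_pos_of_lt_one_of_neg hc.1 hc.2 (neg_neg_of_pos hα)
    filter_upwards [ht.eventually_lt (hTw c hc.1) hgt, hs] with i hi hsi
    exact lt_of_mul_lt_mul_right hi hsi.le

end GeneralizedInverse

section Tail

variable {Ω : Type*} [MeasurableSpace Ω] (μ : Measure Ω) (χ : Ω → ℝ)

def tailF (x : ℝ) : ℝ :=
  (μ {ω | x < χ ω}).toReal

theorem antitone_tailF [IsFiniteMeasure μ] : Antitone (tailF μ χ) := fun _ _ hxy =>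
  ENNReal.toReal_mono (measure_ne_top μ _) (measure_mono fun _ hω => hxy.trans_lt hω)

variable {χ}

theorem tendsto_tailF_atTop [IsFiniteMeasure μ] (hχ : Measurable χ) :
    Tendsto (tailF μ χ) atTop (𝓝 0) := by
  have hempty : (⋂ x : ℝ, {ω | x < χ ω}) = ∅ :=
    Set.iInter_eq_empty_iff.2 fun ω => ⟨χ ω, lt_irrefl (χ ω)⟩
  have h := tendsto_measure_iInter_atTop (μ := μ) (s := fun x : ℝ => {ω | x < χ ω})
    (fun x => (hχ measurableSet_Ioi).nullMeasurableSet)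
    (fun x y hxy ω hω => lt_of_le_of_lt hxy hω) ⟨0, measure_ne_top μ _⟩
  rw [hempty, measure_empty] at h
  exact (ENNReal.tendsto_toReal ENNReal.zero_ne_top).comp h

theorem genInv_distF_one_sub [IsProbabilityMeasure μ] (hχ : Measurable χ) (t : ℝ) :
    genInv (distF μ χ) (1 - t) = sInf {x | tailF μ χ x ≤ t} := by
  have hF : ∀ x, distF μ χ x = 1 - tailF μ χ x := fun x => by
    have hcompl : {ω | χ ω ≤ x} = {ω | x < χ ω}ᶜ := by
      ext
      simp
    rw [distF, tailF, hcompl, prob_compl_eq_one_sub (s := {ω | x < χ ω}) (hχ measurableSet_Ioi),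
      ENNReal.toReal_sub_of_le prob_le_one ENNReal.one_ne_top, ENNReal.toReal_one]
  simp only [genInv, hF, _root_.sub_le_sub_iff_left]

end Tail

section NormingSequences

variable {b : ℕ → ℕ}

theorem tendsto_natCast_div_atTop (hb : ∀ᶠ n in atTop, 0 < b n)
    (hbo : Tendsto (fun n : ℕ => (b n : ℝ) / n) atTop (𝓝 0)) :
    Tendsto (fun n : ℕ => (n : ℝ) / b n) atTop atTop := by
  have hpos : ∀ᶠ n in atTop, 0 < (b n : ℝ) / n := by
    filter_upwards [hb, eventually_gt_atTop 0] with n hbn hn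
    positivity
  simpa only [Pi.inv_def, inv_div] using
    (tendsto_nhdsWithin_iff.2 ⟨hbo, hpos⟩).inv_tendsto_nhdsGT_zero

theorem tendsto_sub_rpow_div_mul_rpow (hb : Tendsto b atTop atTop) {α : ℝ} (hα : α ≠ 0) :
    Tendsto (fun n : ℕ => ((b n : ℝ) - (b n : ℝ) ^ ((2 : ℝ) / 3)) / n *
      (((n : ℝ) / b n) ^ (1 / α)) ^ α) atTop (𝓝 1) := by
  have h := ((tendsto_rpow_neg_atTop (by norm_num : (0 : ℝ) < 1 / 3)).comp
    (tendsto_natCast_atTop_atTop.comp hb)).const_sub 1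
  rw [sub_zero] at h
  refine h.congr' ?_
  filter_upwards [hb.eventually_gt_atTop 0, eventually_gt_atTop 0] with n hbn hn
  have hb' : (b n : ℝ) ≠ 0 := by positivity
  have hu : (((n : ℝ) / b n) ^ (1 / α)) ^ α = n / b n := by
    rw [one_div, Real.rpow_inv_rpow (by positivity) hα]
  rw [hu, Function.comp_apply, Function.comp_apply,
    show -(1 / 3 : ℝ) = 2 / 3 - 1 by norm_num, Real.rpow_sub_one hb']
  field_simp

theorem dSeq_eq_mul {α : ℝ} (ls : ℝ → ℝ) {n : ℕ} (hb : 0 < b n) :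
    dSeq α ls b n = α / (1 - α) *
      (b n * (((n : ℝ) / b n) ^ (1 / α) * ls (((n : ℝ) / b n) ^ (1 / α)))) := by
  have hb' : (0 : ℝ) < b n := Nat.cast_pos.2 hb
  rw [dSeq, Real.rpow_sub hb', Real.rpow_one, Real.div_rpow (Nat.cast_nonneg _) hb'.le]
  field_simp

end NormingSequences

theorem dn_asymptotic_bn_gn_general
    {Ω : Type*} [MeasurableSpace Ω] (μ : Measure Ω) [IsProbabilityMeasure μ]
    (χ : Ω → ℝ) (hχm : Measurable χ)
    (L : ℝ → ℝ) (hL : SlowlyVarying L) (hLpos : ∀ x : ℝ, 0 < x → 0 < L x)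
    {α : ℝ} (hα0 : 0 < α)
    (htail : ∀ x : ℝ, 0 < x → (μ {ω | x < χ ω}).toReal = L x / x ^ α)
    (b : ℕ → ℕ) (hb : Tendsto b atTop atTop)
    (hbo : Tendsto (fun n => (b n : ℝ) / (n : ℝ)) atTop (𝓝 0))
    (ls : ℝ → ℝ) (hls : IsDeBruijnConjugate (fun x => L x ^ (-(1 / α))) ls)
    :
    Tendsto (fun n => dSeq α ls b n / ((b n : ℝ) * gSeq μ χ b n))
      atTop (𝓝 (α / (1 - α))) := by
  set u : ℕ → ℝ := fun n => ((n : ℝ) / b n) ^ (1 / α)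
  have hT := antitone_tailF μ χ
  have hTpos := pos_of_antitone_of_eq_div_rpow hT htail hLpos
  have hlspos : ∀ᶠ x in atTop, 0 < ls x :=
    hls.eventually_pos
      ((eventually_gt_atTop 0).mono fun x hx => Real.rpow_pos_of_pos (hLpos x hx) _)
      (tendsto_mul_rpow_neg_one_div_atTop hα0 htail hLpos hTpos (tendsto_tailF_atTop μ hχm))
  have hbpos : ∀ᶠ n in atTop, 0 < b n := hb.eventually_gt_atTop 0
  have hu : Tendsto u atTop atTop :=
    (tendsto_rpow_atTop (one_div_pos.2 hα0)).comp (tendsto_natCast_div_atTop hbpos hbo)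
  have hg : Tendsto (fun n => gSeq μ χ b n / (u n * ls (u n))) atTop (𝓝 1) := by
    simp only [gSeq, genInv_distF_one_sub μ hχm]
    exact tendsto_sInf_sublevel_div_of_tendsto_mul hT hα0
      ((hu.eventually (hlspos.and (eventually_gt_atTop 0))).mono fun n h => mul_pos h.2 h.1)
      ((hu.eventually_gt_atTop 0).mono fun n h => Real.rpow_pos_of_pos h α)
      (tendsto_sub_rpow_div_mul_rpow hb hα0.ne')
      (fun c hc => tendsto_tail_mul_rpow hα0 hT hTpos htail hL hLpos hls hlspos hu hc)
  have h := (hg.inv₀ one_ne_zero).const_mul (α / (1 - α))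
  rw [inv_one, mul_one] at h
  refine h.congr' ?_
  filter_upwards [hbpos] with n hbn
  rw [dSeq_eq_mul ls hbn, mul_div_assoc, mul_div_mul_left _ _ (Nat.cast_pos.2 hbn).ne', inv_div]

theorem dn_asymptotic_bn_gn
    {Ω : Type*} [MeasurableSpace Ω] (μ : Measure Ω) [IsProbabilityMeasure μ]
    (χ : Ω → ℝ) (hχm : Measurable χ) (hχ0 : ∀ ω, 0 ≤ χ ω)
    (L : ℝ → ℝ) (hL : SlowlyVarying L) (hLpos : ∀ x : ℝ, 0 < x → 0 < L x)
    {α : ℝ} (hα0 : 0 < α) (hα1 : α < 1)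
    (htail : ∀ x : ℝ, 0 < x → (μ {ω | x < χ ω}).toReal = L x / x ^ α)
    (b : ℕ → ℕ) (hb : Tendsto b atTop atTop)
    (hbo : Tendsto (fun n => (b n : ℝ) / (n : ℝ)) atTop (𝓝 0))
    (ls : ℝ → ℝ) (hls : IsDeBruijnConjugate (fun x => L x ^ (-(1 / α))) ls)
    :
    Tendsto (fun n => dSeq α ls b n / ((b n : ℝ) * gSeq μ χ b n))
      atTop (𝓝 (α / (1 - α))) :=
  dn_asymptotic_bn_gn_general μ χ hχm L hL hLpos hα0 htail b hb hbo ls hls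
end
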